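/- arXiv:math/9811176 — 4 statements merged into one kernel-verified Lean document; each statement's English description precedes it below -/
import Mathlib

section
/- Let R₀ ∈ ℝ, let h : (R₀,∞) → ℝ be nonnegative, measurable and locally integrable, and let f : (R₀,∞) → ℝ be measurable and locally bounded. Suppose f satisfies the distributional inequality f' ≥ −h f on (R₀,∞): for every C^∞ function φ ≥ 0 with compact support contained in (R₀,∞), ∫ f(r) φ'(r) dr ≤ ∫ h(r) f(r) φ(r) dr. Fix R₁ > R₀ and set E(r) = exp(∫_{R₁}^r h(t) dt). Then the function r ↦ E(r) f(r) has nonnegative distributional derivative on (R₁,∞): for every C^∞ function φ ≥ 0 with compact support contained in (R₁,∞), ∫ E(r) f(r) φ'(r) dr ≤ 0. (Step (3.7)–(3.8) in the proof of Proposition 3.3.) -/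
open MeasureTheory Set

private theorem aux_poly_contDiff (p : Polynomial ℝ) :
    ContDiff ℝ (⊤ : ℕ∞) fun x : ℝ => Polynomial.eval x p := by
  induction p using Polynomial.induction_on' with
  | monomial n a =>
      simpa [Polynomial.eval_monomial, smul_eq_mul] using
        (contDiff_const (c := a)).mul ((contDiff_id (𝕜 := ℝ)).pow n)
  | add p q hp hq => simpa [Polynomial.eval_add] using hp.add hq

private theorem aux_antideriv (q : Polynomial ℝ) :
    ∃ P : Polynomial ℝ, Polynomial.derivative P = q := by
  induction q using Polynomial.induction_on' with
  | monomial n a =>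
      refine ⟨Polynomial.C (a / (n + 1)) * Polynomial.X ^ (n + 1), ?_⟩
      rw [Polynomial.derivative_C_mul_X_pow]
      norm_num
      rw [show ((n : Polynomial ℝ) + 1) = Polynomial.C ((n : ℝ) + 1) by
        simp [Polynomial.C_add, Polynomial.C_1, Polynomial.C_eq_natCast]]
      rw [← Polynomial.C_mul]
      have h : a / ((n : ℝ) + 1) * ((n : ℝ) + 1) = a := by
        have : ((n : ℝ) + 1) ≠ 0 := by positivity
        field_simp
      rw [h, Polynomial.C_mul_X_pow_eq_monomial]
  | add p q hp hq =>
      obtain ⟨P, hP⟩ := hp; obtain ⟨Q, hQ⟩ := hq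
      exact ⟨P + Q, by simp [hP, hQ]⟩

private theorem aux_exp_dist {a b c : ℝ} (ha : a ≤ c) (hb : b ≤ c) :
    |Real.exp a - Real.exp b| ≤ Real.exp c * |a - b| := by
  have key : ∀ x y : ℝ, x ≤ y → y ≤ c → Real.exp y - Real.exp x ≤ Real.exp c * (y - x) := by
    intro x y hxy hyc
    have h1 : 1 - (y - x) ≤ Real.exp (x - y) := by
      have := Real.add_one_le_exp (x - y); linarith
    have h2 : Real.exp (x - y) * Real.exp y = Real.exp x := by
      rw [← Real.exp_add]; ring_nf
    have h3 : (1 - (y - x)) * Real.exp y ≤ Real.exp x := by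
      calc (1 - (y - x)) * Real.exp y ≤ Real.exp (x - y) * Real.exp y :=
            mul_le_mul_of_nonneg_right h1 (Real.exp_pos y).le
        _ = Real.exp x := h2
    nlinarith [Real.exp_pos y, Real.exp_le_exp.2 hyc, sub_nonneg.2 hxy]
  rcases le_total a b with hab | hab
  · rw [abs_sub_comm, abs_of_nonneg (sub_nonneg.2 (Real.exp_le_exp.2 hab)),
      abs_sub_comm, abs_of_nonneg (sub_nonneg.2 hab)]
    exact key a b hab hb
  · rw [abs_of_nonneg (sub_nonneg.2 (Real.exp_le_exp.2 hab)), abs_of_nonneg (sub_nonneg.2 hab)]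
    exact key b a hab ha

set_option maxHeartbeats 1000000 in
/-- Steps (3.7)–(3.8) in the proof of Proposition 3.3: if `f` satisfies the
distributional inequality `f' ≥ -h f` on `(R₀, ∞)`, then with
`E r = exp (∫_{R₁}^r h)`, the function `r ↦ E r * f r` has nonnegative
distributional derivative on `(R₁, ∞)`. -/
theorem exp_weight_nonneg_distrib_deriv
    (R₀ : ℝ) (h f : ℝ → ℝ)
    (hh_nonneg : ∀ r ∈ Set.Ioi R₀, 0 ≤ h r)
    (hh_meas : Measurable h)
    (hh_loc : ∀ K : Set ℝ, IsCompact K → K ⊆ Set.Ioi R₀ → IntegrableOn h K)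
    (hf_meas : Measurable f)
    (hf_locbdd : ∀ K : Set ℝ, IsCompact K → K ⊆ Set.Ioi R₀ →
      ∃ C : ℝ, ∀ x ∈ K, |f x| ≤ C)
    (hdist : ∀ φ : ℝ → ℝ, ContDiff ℝ (⊤ : ℕ∞) φ → HasCompactSupport φ →
      tsupport φ ⊆ Set.Ioi R₀ → (∀ x, 0 ≤ φ x) →
      ∫ r in Set.Ioi R₀, f r * deriv φ r ≤
        ∫ r in Set.Ioi R₀, h r * f r * φ r)
    (R₁ : ℝ) (hR₁ : R₀ < R₁) :
    ∀ φ : ℝ → ℝ, ContDiff ℝ (⊤ : ℕ∞) φ → HasCompactSupport φ →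
      tsupport φ ⊆ Set.Ioi R₁ → (∀ x, 0 ≤ φ x) →
      ∫ r in Set.Ioi R₁, (Real.exp (∫ t in R₁..r, h t) * f r) * deriv φ r ≤ 0 := by
  intro φ hφs hφc hφK hφ0
  -- Geometry: compact support fits in `Icc R₁ M`, inside `Icc a M ⊆ Ioi R₀`.
  obtain ⟨ρ, hρ⟩ := hφc.isBounded.subset_closedBall 0
  set M : ℝ := max ρ R₁ + 1 with hMdef
  have hR₁M : R₁ < M := lt_of_le_of_lt (le_max_right _ _) (lt_add_one _)
  have hKM : ∀ x ∈ tsupport φ, x < M := by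
    intro x hx
    have hb := hρ hx
    rw [Metric.mem_closedBall, Real.dist_eq, sub_zero] at hb
    have : x ≤ ρ := (le_abs_self x).trans hb
    have : x ≤ max ρ R₁ := this.trans (le_max_left _ _)
    linarith [lt_add_one (max ρ R₁)]
  set a : ℝ := (R₀ + R₁) / 2 with hadef
  have haR₀ : R₀ < a := by rw [hadef]; linarith
  have haR₁ : a < R₁ := by rw [hadef]; linarith
  have hJsub : Icc a M ⊆ Ioi R₀ := fun x hx => lt_of_lt_of_le haR₀ hx.1
  have hJi : IntegrableOn h (Icc a M) := hh_loc _ isCompact_Icc hJsub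
  have hLsub : Icc R₁ M ⊆ Icc a M := Icc_subset_Icc haR₁.le le_rfl
  have hLi : IntegrableOn h (Icc R₁ M) := hJi.mono_set hLsub
  have hKL : tsupport φ ⊆ Icc R₁ M := fun x hx => ⟨(hφK hx).le, (hKM x hx).le⟩
  -- Bounds
  obtain ⟨C₀, hC₀⟩ := hf_locbdd (Icc a M) isCompact_Icc hJsub
  set C : ℝ := max C₀ 0 with hCdef
  have hC : ∀ x ∈ Icc a M, |f x| ≤ C := fun x hx => (hC₀ x hx).trans (le_max_left _ _)
  have hCL : ∀ x ∈ Icc R₁ M, |f x| ≤ C := fun x hx => hC x (hLsub hx)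
  have hC0 : 0 ≤ C := le_max_right _ _
  obtain ⟨Cφ, hCφ⟩ := hφs.continuous.bounded_above_of_compact_support hφc
  have hCφ0 : 0 ≤ Cφ := (norm_nonneg _).trans (hCφ 0)
  have hφd : Continuous (deriv φ) := hφs.continuous_deriv (by simp)
  have hφdc : HasCompactSupport (deriv φ) := hφc.deriv
  obtain ⟨Cφ', hCφ'⟩ := hφd.bounded_above_of_compact_support hφdc
  have hφdint : Integrable (fun x => |deriv φ x|) :=
    (hφd.integrable_of_hasCompactSupport hφdc).abs
  set Iφ : ℝ := ∫ x, |deriv φ x| with hIφdef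
  have hIφ0 : 0 ≤ Iφ := integral_nonneg fun x => abs_nonneg _
  set I : ℝ := ∫ x in Icc R₁ M, |h x| with hIdef
  have hI0 : 0 ≤ I := setIntegral_nonneg measurableSet_Icc fun x _ => abs_nonneg _
  set B : ℝ := Real.exp (I + 1) with hBdef
  have hB0 : 0 < B := Real.exp_pos _
  -- continuous primitive of the truncation of h
  set h₀ : ℝ → ℝ := (Icc R₁ M).indicator h with hh₀def
  have hh₀i : Integrable h₀ := (integrable_indicator_iff measurableSet_Icc).2 hLi
  have hh₀eq : ∀ x ∈ Icc R₁ M, h₀ x = h x := fun x hx => indicator_of_mem hx h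
  set Hp : ℝ → ℝ := fun r => ∫ t in R₁..r, h₀ t with hHpdef
  have hHpcont : Continuous Hp := by
    apply intervalIntegral.continuous_primitive
    exact fun a b => hh₀i.intervalIntegrable
  have hHeq : ∀ r ∈ Icc R₁ M, (∫ t in R₁..r, h t) = Hp r := by
    intro r hr
    apply intervalIntegral.integral_congr
    intro t ht
    rw [uIcc_of_le hr.1] at ht
    exact (hh₀eq t ⟨ht.1, ht.2.trans hr.2⟩).symm
  have hHpI : ∀ r ∈ Icc R₁ M, |Hp r| ≤ I := by
    intro r hr
    calc |Hp r| ≤ ∫ t in R₁..r, |h₀ t| :=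
          intervalIntegral.abs_integral_le_integral_abs hr.1
      _ = ∫ t in Ioc R₁ r, |h₀ t| := intervalIntegral.integral_of_le hr.1
      _ ≤ ∫ t in Icc R₁ M, |h₀ t| := by
          apply setIntegral_mono_set ((integrable_indicator_iff measurableSet_Icc).2 hLi).abs.integrableOn
          · exact Filter.Eventually.of_forall fun x => abs_nonneg _
          · exact HasSubset.Subset.eventuallyLE (Ioc_subset_Icc_self.trans (Icc_subset_Icc le_rfl hr.2))
      _ = I := by
          rw [hIdef]
          exact setIntegral_congr_fun measurableSet_Icc fun x hx => by rw [hh₀eq x hx]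
  -- vanishing off the support
  have hvφ : ∀ x, x ∉ tsupport φ → φ x = 0 := fun x hx => image_eq_zero_of_notMem_tsupport hx
  have hvφ' : ∀ x, x ∉ tsupport φ → deriv φ x = 0 := by
    intro x hx
    by_contra hne
    exact hx (support_deriv_subset (by simpa [Function.mem_support] using hne))
  -- rewrite the target integral as an integral over ℝ with the continuous primitive
  have hT : (∫ r in Set.Ioi R₁, (Real.exp (∫ t in R₁..r, h t) * f r) * deriv φ r)
      = ∫ r, (Real.exp (Hp r) * f r) * deriv φ r := by
    rw [setIntegral_eq_integral_of_forall_compl_eq_zero (fun x hx => by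
      have hxs : x ∉ tsupport φ := fun hs => hx (hφK hs)
      rw [hvφ' x hxs]; ring)]
    apply congrArg (integral volume)
    funext x
    by_cases hx : x ∈ tsupport φ
    · rw [hHeq x (hKL hx)]
    · rw [hvφ' x hx]; ring
  rw [hT]
  -- ε-argument
  apply le_of_forall_pos_le_add
  intro ε0 hε0
  rw [zero_add]
  set D : ℝ := C * B * (Cφ + Iφ) + 1 with hDdef
  have hD1 : (1 : ℝ) ≤ D := by
    have : 0 ≤ C * B * (Cφ + Iφ) := by positivity
    rw [hDdef]; linarith
  have hD0 : (0 : ℝ) < D := lt_of_lt_of_le one_pos hD1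
  set ε : ℝ := min (ε0 / D) 1 with hεdef
  have hε : 0 < ε := lt_min (div_pos hε0 hD0) one_pos
  have hε1 : ε ≤ 1 := min_le_right _ _
  have hεD : D * ε ≤ ε0 := by
    have h1 : ε ≤ ε0 / D := min_le_left _ _
    calc D * ε ≤ D * (ε0 / D) := mul_le_mul_of_nonneg_left h1 hD0.le
      _ = ε0 := by field_simp
  -- Step 1: continuous compactly supported approximation of h₀ in L¹
  obtain ⟨u, hu_supp, hu_eLp, hu_cont, hu_mem⟩ :=
    (memLp_one_iff_integrable.2 hh₀i).exists_hasCompactSupport_eLpNorm_sub_le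
      (μ := volume) (p := 1) ENNReal.one_ne_top
      (ε := ENNReal.ofReal (ε / 2)) (ENNReal.ofReal_pos.2 (by linarith)).ne'
  have hu_int : Integrable u := memLp_one_iff_integrable.1 hu_mem
  have hdiff_int : Integrable (fun x => h₀ x - u x) := hh₀i.sub hu_int
  have hstep1 : ∫ x, |h₀ x - u x| ≤ ε / 2 := by
    have e1 : ∫ x, |h₀ x - u x| = (eLpNorm (h₀ - u) 1 volume).toReal := by
      rw [eLpNorm_one_eq_lintegral_enorm]
      simp only [Pi.sub_apply]
      rw [← integral_norm_eq_lintegral_enorm hdiff_int.aestronglyMeasurable]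
      simp [Real.norm_eq_abs]
    rw [e1]
    calc (eLpNorm (h₀ - u) 1 volume).toReal
        ≤ (ENNReal.ofReal (ε / 2)).toReal := ENNReal.toReal_mono ENNReal.ofReal_ne_top hu_eLp
      _ = ε / 2 := ENNReal.toReal_ofReal (by linarith)
  -- Step 2: polynomial uniform approximation of u on Icc R₁ M
  set ε2 : ℝ := (ε / 2) / (M - R₁ + 1) with hε2def
  have hMR : 0 < M - R₁ := by linarith
  have hε2 : 0 < ε2 := div_pos (by linarith) (by linarith)
  obtain ⟨q, hq⟩ := exists_polynomial_near_of_continuousOn R₁ M u hu_cont.continuousOn ε2 hε2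
  have hqcont : Continuous fun x : ℝ => Polynomial.eval x q := q.continuous_aeval
  have hstep2 : ∫ x in Icc R₁ M, |u x - Polynomial.eval x q| ≤ ε / 2 := by
    have hb : ∀ x ∈ Icc R₁ M, |u x - Polynomial.eval x q| ≤ ε2 := by
      intro x hx
      rw [abs_sub_comm]
      exact (hq x hx).le
    calc ∫ x in Icc R₁ M, |u x - Polynomial.eval x q|
        ≤ ∫ _x in Icc R₁ M, ε2 := by
          apply setIntegral_mono_on
          · exact ((hu_cont.sub hqcont).abs.continuousOn.integrableOn_compact isCompact_Icc)
          · exact integrableOn_const (by rw [Real.volume_Icc]; exact ENNReal.ofReal_ne_top)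
          · exact measurableSet_Icc
          · exact hb
      _ = (M - R₁) * ε2 := by
          rw [setIntegral_const, measureReal_def, Real.volume_Icc, ENNReal.toReal_ofReal hMR.le, smul_eq_mul]
      _ ≤ (M - R₁ + 1) * ε2 := by nlinarith
      _ = ε / 2 := by rw [hε2def]; field_simp
  have hhq : ∫ x in Icc R₁ M, |h x - Polynomial.eval x q| ≤ ε := by
    have hint1 : IntegrableOn (fun x => |h₀ x - u x|) (Icc R₁ M) := hdiff_int.abs.integrableOn
    have hint2 : IntegrableOn (fun x => |u x - Polynomial.eval x q|) (Icc R₁ M) :=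
      ((hu_cont.sub hqcont).abs.continuousOn.integrableOn_compact isCompact_Icc)
    have hmono : ∫ x in Icc R₁ M, |h x - Polynomial.eval x q|
        ≤ ∫ x in Icc R₁ M, (|h₀ x - u x| + |u x - Polynomial.eval x q|) := by
      apply setIntegral_mono_on
      · exact ((hLi.sub (hqcont.continuousOn.integrableOn_compact isCompact_Icc)).abs)
      · exact hint1.add hint2
      · exact measurableSet_Icc
      · intro x hx
        rw [← hh₀eq x hx]
        exact (abs_sub_le _ _ _).trans le_rfl
    have hsplit : ∫ x in Icc R₁ M, (|h₀ x - u x| + |u x - Polynomial.eval x q|)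
        = (∫ x in Icc R₁ M, |h₀ x - u x|) + ∫ x in Icc R₁ M, |u x - Polynomial.eval x q| :=
      integral_add hint1 hint2
    have hle1 : ∫ x in Icc R₁ M, |h₀ x - u x| ≤ ε / 2 :=
      (setIntegral_le_integral hdiff_int.abs
        (Filter.Eventually.of_forall fun x => abs_nonneg _)).trans hstep1
    linarith
  -- antiderivative of q
  obtain ⟨P, hP⟩ := aux_antideriv q
  set G : ℝ → ℝ := fun r => Polynomial.eval r P - Polynomial.eval R₁ P with hGdef
  have hGd : ∀ r, HasDerivAt G (Polynomial.eval r q) r := by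
    intro r
    have := (P.hasDerivAt r).sub_const (Polynomial.eval R₁ P)
    rwa [hP] at this
  have hGsm : ContDiff ℝ (⊤ : ℕ∞) G := (aux_poly_contDiff P).sub contDiff_const
  have hGF : ∀ r, G r = ∫ t in R₁..r, Polynomial.eval t q := by
    intro r
    rw [intervalIntegral.integral_eq_sub_of_hasDerivAt (fun t _ => hGd t)
      (hqcont.intervalIntegrable _ _)]
    simp [hGdef]
  have hqh₀int : IntegrableOn (fun t => |Polynomial.eval t q - h₀ t|) (Icc R₁ M) :=
    ((hqcont.continuousOn.integrableOn_compact isCompact_Icc).sub hh₀i.integrableOn).abs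
  have hGH : ∀ r ∈ Icc R₁ M, |G r - Hp r| ≤ ε := by
    intro r hr
    have e : G r - Hp r = ∫ t in R₁..r, (Polynomial.eval t q - h₀ t) := by
      rw [hGF r]
      simp only [hHpdef]
      rw [← intervalIntegral.integral_sub (hqcont.intervalIntegrable _ _)
        hh₀i.intervalIntegrable]
    calc |G r - Hp r| = |∫ t in R₁..r, (Polynomial.eval t q - h₀ t)| := by rw [e]
      _ ≤ ∫ t in R₁..r, |Polynomial.eval t q - h₀ t| :=
          intervalIntegral.abs_integral_le_integral_abs hr.1
      _ = ∫ t in Ioc R₁ r, |Polynomial.eval t q - h₀ t| := intervalIntegral.integral_of_le hr.1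
      _ ≤ ∫ t in Icc R₁ M, |Polynomial.eval t q - h₀ t| := by
          apply setIntegral_mono_set hqh₀int
          · exact Filter.Eventually.of_forall fun x => abs_nonneg _
          · exact HasSubset.Subset.eventuallyLE
              (Ioc_subset_Icc_self.trans (Icc_subset_Icc le_rfl hr.2))
      _ = ∫ t in Icc R₁ M, |h t - Polynomial.eval t q| := by
          apply setIntegral_congr_fun measurableSet_Icc
          intro x hx
          show |Polynomial.eval x q - h₀ x| = |h x - Polynomial.eval x q|
          rw [hh₀eq x hx, abs_sub_comm]
      _ ≤ ε := hhq
  have hGb : ∀ r ∈ Icc R₁ M, |G r| ≤ I + 1 := by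
    intro r hr
    have h1 := hGH r hr
    have h2 := hHpI r hr
    have e : G r = (G r - Hp r) + Hp r := by ring
    rw [e]
    calc |(G r - Hp r) + Hp r| ≤ |G r - Hp r| + |Hp r| := abs_add_le _ _
      _ ≤ I + 1 := by linarith
  have hEG : ∀ r ∈ Icc R₁ M, Real.exp (G r) ≤ B := by
    intro r hr
    rw [hBdef]
    exact Real.exp_le_exp.2 (le_of_abs_le (hGb r hr))
  have hEdiff : ∀ r ∈ Icc R₁ M, |Real.exp (G r) - Real.exp (Hp r)| ≤ B * ε := by
    intro r hr
    rw [hBdef]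
    exact (aux_exp_dist (le_of_abs_le (hGb r hr))
      (le_of_abs_le ((hHpI r hr).trans (by linarith)))).trans
      (mul_le_mul_of_nonneg_left (hGH r hr) (Real.exp_pos _).le)
  -- test function ψ
  set ψ : ℝ → ℝ := fun r => Real.exp (G r) * φ r with hψdef
  have hψs : ContDiff ℝ (⊤ : ℕ∞) ψ := (Real.contDiff_exp.comp hGsm).mul hφs
  have hψc : HasCompactSupport ψ := hφc.mul_left
  have hψK : tsupport ψ ⊆ tsupport φ := tsupport_mul_subset_right
  have hψsupp : tsupport ψ ⊆ Set.Ioi R₀ := hψK.trans (hφK.trans (Ioi_subset_Ioi hR₁.le))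
  have hψ0 : ∀ x, 0 ≤ ψ x := fun x => mul_nonneg (Real.exp_pos _).le (hφ0 x)
  have hφdiff : ∀ r, HasDerivAt φ (deriv φ r) r := fun r =>
    ((hφs.differentiable (by simp)) r).hasDerivAt
  have hψd : ∀ r, deriv ψ r = Real.exp (G r) * Polynomial.eval r q * φ r
      + Real.exp (G r) * deriv φ r := by
    intro r
    have h1 : HasDerivAt (fun x => Real.exp (G x)) (Real.exp (G r) * Polynomial.eval r q) r :=
      (hGd r).exp
    have h2 := (h1.mul (hφdiff r)).deriv
    rw [hψdef]; exact h2
  have hvψ : ∀ x, x ∉ tsupport φ → ψ x = 0 := by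
    intro x hx
    rw [hψdef]
    simp [hvφ x hx]
  -- integrability
  have auxInt : ∀ w b : ℝ → ℝ, AEStronglyMeasurable w volume → IntegrableOn b (Icc R₁ M) →
      (∀ x, |w x| ≤ (Icc R₁ M).indicator b x) → Integrable w := by
    intro w b hw hb hbd
    refine ((integrable_indicator_iff measurableSet_Icc).2 hb).mono' hw ?_
    exact Filter.Eventually.of_forall (by simpa [Real.norm_eq_abs] using hbd)
  obtain ⟨C1, hC1⟩ := (isCompact_Icc (a := R₁) (b := M)).exists_bound_of_continuousOn
    (((Real.continuous_exp.comp hGsm.continuous).mul hφs.continuous).continuousOn)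
  obtain ⟨C2, hC2⟩ := (isCompact_Icc (a := R₁) (b := M)).exists_bound_of_continuousOn
    ((((Real.continuous_exp.comp hGsm.continuous).mul hqcont).mul hφs.continuous).continuousOn)
  obtain ⟨C3, hC3⟩ := (isCompact_Icc (a := R₁) (b := M)).exists_bound_of_continuousOn
    (((Real.continuous_exp.comp hGsm.continuous).mul hφd).continuousOn)
  obtain ⟨C4, hC4⟩ := (isCompact_Icc (a := R₁) (b := M)).exists_bound_of_continuousOn
    (((Real.continuous_exp.comp hHpcont).mul hφd).continuousOn)
  have i1 : Integrable fun x => f x * (Real.exp (G x) * Polynomial.eval x q * φ x) := by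
    apply auxInt _ (fun _ => C * C2)
    · exact hf_meas.aestronglyMeasurable.mul
        (((Real.continuous_exp.comp hGsm.continuous).mul hqcont).mul
          hφs.continuous).aestronglyMeasurable
    · exact integrableOn_const (by rw [Real.volume_Icc]; exact ENNReal.ofReal_ne_top)
    · intro x
      by_cases hx : x ∈ Icc R₁ M
      · rw [indicator_of_mem hx, abs_mul]
        exact mul_le_mul (hCL x hx) (by simpa [Real.norm_eq_abs, abs_mul, Real.abs_exp] using hC2 x hx)
          (abs_nonneg _) hC0
      · rw [indicator_of_notMem hx, hvφ x fun hs => hx (hKL hs)]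
        simp
  have i2 : Integrable fun x => f x * (Real.exp (G x) * deriv φ x) := by
    apply auxInt _ (fun _ => C * C3)
    · exact hf_meas.aestronglyMeasurable.mul
        ((Real.continuous_exp.comp hGsm.continuous).mul hφd).aestronglyMeasurable
    · exact integrableOn_const (by rw [Real.volume_Icc]; exact ENNReal.ofReal_ne_top)
    · intro x
      by_cases hx : x ∈ Icc R₁ M
      · rw [indicator_of_mem hx, abs_mul]
        exact mul_le_mul (hCL x hx) (by simpa [Real.norm_eq_abs, abs_mul, Real.abs_exp] using hC3 x hx)
          (abs_nonneg _) hC0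
      · rw [indicator_of_notMem hx, hvφ' x fun hs => hx (hKL hs)]
        simp
  have iT : Integrable fun x => (Real.exp (Hp x) * f x) * deriv φ x := by
    apply auxInt _ (fun _ => C * C4)
    · exact ((Real.continuous_exp.comp hHpcont).aestronglyMeasurable.mul
        hf_meas.aestronglyMeasurable).mul hφd.aestronglyMeasurable
    · exact integrableOn_const (by rw [Real.volume_Icc]; exact ENNReal.ofReal_ne_top)
    · intro x
      by_cases hx : x ∈ Icc R₁ M
      · rw [indicator_of_mem hx,
          show (Real.exp (Hp x) * f x) * deriv φ x = f x * (Real.exp (Hp x) * deriv φ x) by ring,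
          abs_mul]
        exact mul_le_mul (hCL x hx) (by simpa [Real.norm_eq_abs, abs_mul, Real.abs_exp] using hC4 x hx)
          (abs_nonneg _) hC0
      · rw [indicator_of_notMem hx, hvφ' x fun hs => hx (hKL hs)]
        simp
  have i3 : Integrable fun x => h x * f x * ψ x := by
    apply auxInt _ (fun x => |h x| * (C * C1))
    · exact (hh_meas.mul hf_meas).aestronglyMeasurable.mul hψs.continuous.aestronglyMeasurable
    · exact hLi.abs.mul_const _
    · intro x
      by_cases hx : x ∈ Icc R₁ M
      · rw [indicator_of_mem hx, abs_mul, abs_mul, mul_assoc]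
        refine mul_le_mul_of_nonneg_left ?_ (abs_nonneg (h x))
        have hψb : |ψ x| ≤ C1 := by
          rw [hψdef]
          simpa [Real.norm_eq_abs, abs_mul, Real.abs_exp] using hC1 x hx
        exact mul_le_mul (hCL x hx) hψb (abs_nonneg _) hC0
      · rw [indicator_of_notMem hx, hvψ x fun hs => hx (hKL hs)]
        simp
  -- the main computation
  have key1 : (∫ x, f x * deriv ψ x)
      = (∫ x, f x * (Real.exp (G x) * Polynomial.eval x q * φ x))
      + ∫ x, f x * (Real.exp (G x) * deriv φ x) := by
    rw [← integral_add i1 i2]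
    apply congrArg (integral volume)
    funext x
    rw [hψd x]
    ring
  have key2 := hdist ψ hψs hψc hψsupp hψ0
  have hS1 : (∫ r in Set.Ioi R₀, f r * deriv ψ r) = ∫ r, f r * deriv ψ r := by
    apply setIntegral_eq_integral_of_forall_compl_eq_zero
    intro x hx
    have hxs : x ∉ tsupport φ := fun hs => hx (Ioi_subset_Ioi hR₁.le (hφK hs))
    rw [hψd x, hvφ x hxs, hvφ' x hxs]
    ring
  have hS2 : (∫ r in Set.Ioi R₀, h r * f r * ψ r) = ∫ r, h r * f r * ψ r := by
    apply setIntegral_eq_integral_of_forall_compl_eq_zero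
    intro x hx
    have hxs : x ∉ tsupport φ := fun hs => hx (Ioi_subset_Ioi hR₁.le (hφK hs))
    rw [hvψ x hxs]
    ring
  rw [hS1, hS2] at key2
  have key3 : (∫ x, f x * (Real.exp (G x) * deriv φ x))
      ≤ ∫ x, (h x - Polynomial.eval x q) * (f x * (Real.exp (G x) * φ x)) := by
    have e : (∫ x, (h x - Polynomial.eval x q) * (f x * (Real.exp (G x) * φ x)))
        = (∫ x, h x * f x * ψ x)
          - ∫ x, f x * (Real.exp (G x) * Polynomial.eval x q * φ x) := by
      rw [← integral_sub i3 i1]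
      apply congrArg (integral volume)
      funext x
      simp only [hψdef]
      ring
    linarith [key1, key2, e]
  have hCBCφ : 0 ≤ C * B * Cφ := mul_nonneg (mul_nonneg hC0 hB0.le) hCφ0
  have key4 : (∫ x, (h x - Polynomial.eval x q) * (f x * (Real.exp (G x) * φ x)))
      ≤ C * B * Cφ * ε := by
    set b1 : ℝ → ℝ := (Icc R₁ M).indicator (fun t => C * B * Cφ * |h t - Polynomial.eval t q|)
      with hb1def
    have hb1int : Integrable b1 := (integrable_indicator_iff measurableSet_Icc).2
      (((hLi.sub (hqcont.continuousOn.integrableOn_compact isCompact_Icc)).abs).const_mul _)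
    have hptw : ∀ x,
        ‖(h x - Polynomial.eval x q) * (f x * (Real.exp (G x) * φ x))‖ ≤ b1 x := by
      intro x
      rw [Real.norm_eq_abs, hb1def]
      by_cases hx : x ∈ Icc R₁ M
      · rw [indicator_of_mem hx, abs_mul, abs_mul, abs_mul]
        have h1 : |f x| ≤ C := hCL x hx
        have h2 : |Real.exp (G x)| ≤ B := by
          rw [abs_of_pos (Real.exp_pos _)]
          exact hEG x hx
        have h3 : |φ x| ≤ Cφ := by rw [← Real.norm_eq_abs]; exact hCφ x
        have hin : |Real.exp (G x)| * |φ x| ≤ B * Cφ :=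
          mul_le_mul h2 h3 (abs_nonneg _) hB0.le
        have hout : |f x| * (|Real.exp (G x)| * |φ x|) ≤ C * (B * Cφ) :=
          mul_le_mul h1 hin (mul_nonneg (abs_nonneg _) (abs_nonneg _)) hC0
        calc |h x - Polynomial.eval x q| * (|f x| * (|Real.exp (G x)| * |φ x|))
            ≤ |h x - Polynomial.eval x q| * (C * (B * Cφ)) :=
              mul_le_mul_of_nonneg_left hout (abs_nonneg _)
          _ = C * B * Cφ * |h x - Polynomial.eval x q| := by ring
      · rw [indicator_of_notMem hx, hvφ x fun hs => hx (hKL hs)]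
        simp
    calc (∫ x, (h x - Polynomial.eval x q) * (f x * (Real.exp (G x) * φ x)))
        ≤ |∫ x, (h x - Polynomial.eval x q) * (f x * (Real.exp (G x) * φ x))| := le_abs_self _
      _ ≤ ∫ x, b1 x := by
          simpa [Real.norm_eq_abs] using
            norm_integral_le_of_norm_le hb1int (Filter.Eventually.of_forall hptw)
      _ = ∫ x in Icc R₁ M, C * B * Cφ * |h x - Polynomial.eval x q| := by
          rw [hb1def, integral_indicator measurableSet_Icc]
      _ = C * B * Cφ * ∫ x in Icc R₁ M, |h x - Polynomial.eval x q| := by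
          rw [integral_const_mul]
      _ ≤ C * B * Cφ * ε := mul_le_mul_of_nonneg_left hhq hCBCφ
  have key5 : (∫ x, (Real.exp (Hp x) * f x) * deriv φ x)
      - (∫ x, f x * (Real.exp (G x) * deriv φ x)) ≤ C * B * Iφ * ε := by
    have e : (∫ x, (Real.exp (Hp x) * f x) * deriv φ x)
        - (∫ x, f x * (Real.exp (G x) * deriv φ x))
        = ∫ x, (Real.exp (Hp x) - Real.exp (G x)) * (f x * deriv φ x) := by
      rw [← integral_sub iT i2]
      apply congrArg (integral volume)
      funext x
      ring
    rw [e]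
    have hb2int : Integrable (fun x => C * B * ε * |deriv φ x|) := hφdint.const_mul _
    have hCBε : 0 ≤ C * B * ε := mul_nonneg (mul_nonneg hC0 hB0.le) hε.le
    have hptw : ∀ x, ‖(Real.exp (Hp x) - Real.exp (G x)) * (f x * deriv φ x)‖
        ≤ C * B * ε * |deriv φ x| := by
      intro x
      rw [Real.norm_eq_abs]
      by_cases hx : x ∈ Icc R₁ M
      · have h1 : |Real.exp (Hp x) - Real.exp (G x)| ≤ B * ε := by
          rw [abs_sub_comm]
          exact hEdiff x hx
        have h2 : |f x| ≤ C := hCL x hx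
        calc |(Real.exp (Hp x) - Real.exp (G x)) * (f x * deriv φ x)|
            = |Real.exp (Hp x) - Real.exp (G x)| * (|f x| * |deriv φ x|) := by
              rw [abs_mul, abs_mul]
          _ ≤ (B * ε) * (C * |deriv φ x|) :=
              mul_le_mul h1 (mul_le_mul_of_nonneg_right h2 (abs_nonneg _))
                (mul_nonneg (abs_nonneg _) (abs_nonneg _))
                (mul_nonneg hB0.le hε.le)
          _ = C * B * ε * |deriv φ x| := by ring
      · have hz : deriv φ x = 0 := hvφ' x fun hs => hx (hKL hs)
        rw [hz]
        simp
    calc (∫ x, (Real.exp (Hp x) - Real.exp (G x)) * (f x * deriv φ x))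
        ≤ |∫ x, (Real.exp (Hp x) - Real.exp (G x)) * (f x * deriv φ x)| := le_abs_self _
      _ ≤ ∫ x, C * B * ε * |deriv φ x| := by
          simpa [Real.norm_eq_abs] using
            norm_integral_le_of_norm_le hb2int (Filter.Eventually.of_forall hptw)
      _ = C * B * ε * Iφ := by rw [integral_const_mul, hIφdef]
      _ = C * B * Iφ * ε := by ring
  have final : (∫ x, (Real.exp (Hp x) * f x) * deriv φ x) ≤ C * B * (Cφ + Iφ) * ε := by
    have h34 := key3.trans key4
    have hsum : C * B * Cφ * ε + C * B * Iφ * ε = C * B * (Cφ + Iφ) * ε := by ring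
    linarith [key5]
  calc (∫ x, (Real.exp (Hp x) * f x) * deriv φ x) ≤ C * B * (Cφ + Iφ) * ε := final
    _ ≤ D * ε := by
        have hle : C * B * (Cφ + Iφ) ≤ D := by rw [hDdef]; linarith
        exact mul_le_mul_of_nonneg_right hle hε.le
    _ ≤ ε0 := hεD
end

section
/- Let N ≥ 2 be an integer, R₀ > 0, and E_{R₀} = {x ∈ ℝ^N : |x| > R₀}. Let Q₀, Q₀ʳ : E_{R₀} → ℝ be functions bounded on each sphere {|x| = r} (r > R₀), with Q₀(x) ≤ 0 for all x, and let h : (R₀,∞) → ℝ satisfy 0 < h(r) ≤ 2/r for all r > R₀. Define b(r) = inf_{|x|=r} [−(Q₀(x) + h(r)^{−1} Q₀ʳ(x))] and p(r) = inf_{|x|=r} [−(2Q₀(x) + r Q₀ʳ(x))]. Let c₀ > 0 and let F : (R₀,∞) → ℝ satisfy F(r)² ≤ c₀ r⁴ h(r)² b(r) for all r > R₀ and F(r) → ∞ as r → ∞. Then r² p(r) → ∞ as r → ∞; consequently, for every c₁ > 0 there exists r₀ > R₀ such that p(r) − c₁ r^{−2} ≥ p(r)/2 for all r ≥ r₀.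 (Steps (4.21)–(4.22) in the proof of Proposition 4.4.) -/
/-!
Since `F r → ∞`, the inequality `F r ^ 2 ≤ c₀ r⁴ h(r)² b(r)` forces `b(r) > 0` for large `r`;
in particular `b(r)` is the infimum of a nonempty set bounded below.
Because `Q₀ ≤ 0` and `r h(r) ≤ 2`, `r h(r)` times the function minimised in `b(r)` is at most the
function minimised in `p(r)`, so `p(r) ≥ r h(r) b(r)`, and then
`r² p(r) ≥ r³ h(r) b(r) ≥ r⁴ h(r)² b(r) / 2 ≥ F(r)² / (2 c₀) → ∞`.
The second claim is a rewriting of `r² p(r) ≥ 2 c₁` for large `r`.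
-/

open Set Filter

/-- In `ℝ`, `sInf` is `0` on empty and on unbounded-below sets. -/
theorem Real.nonempty_and_bddBelow_of_sInf_ne_zero {s : Set ℝ} (hs : sInf s ≠ 0) :
    s.Nonempty ∧ BddBelow s := by
  refine ⟨Set.nonempty_iff_ne_empty.2 ?_, ?_⟩
  · rintro rfl
    exact hs Real.sInf_empty
  · by_contra hb
    exact hs (Real.sInf_of_not_bddBelow hb)

theorem mul_sInf_image_le_sInf_image {α : Type*} {s : Set α} {f g : α → ℝ} {c : ℝ}
    (hc : 0 ≤ c) (hs : s.Nonempty) (hf : BddBelow (f '' s)) (hfg : ∀ x ∈ s, c * f x ≤ g x) :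
    c * sInf (f '' s) ≤ sInf (g '' s) := by
  refine le_csInf (hs.image g) ?_
  rintro _ ⟨x, hx, rfl⟩
  exact (mul_le_mul_of_nonneg_left (csInf_le hf ⟨x, hx, rfl⟩) hc).trans (hfg x hx)

theorem mul_neg_add_inv_mul_le {q q' r t : ℝ} (hq : q ≤ 0) (ht : 0 < t) (hrt : r * t ≤ 2) :
    r * t * -(q + t⁻¹ * q') ≤ -(2 * q + r * q') := by
  have hcancel : r * t * (t⁻¹ * q') = r * q' := by field_simp
  nlinarith

theorem sq_div_le_of_le_mul {c B P F r t : ℝ} (hc : 0 < c) (hr : 0 < r) (ht : 0 < t)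
    (hrt : r * t ≤ 2) (hB : 0 ≤ B) (hF : F ^ 2 ≤ c * r ^ 4 * t ^ 2 * B) (hP : r * t * B ≤ P) :
    F ^ 2 / (2 * c) ≤ r ^ 2 * P := by
  rw [div_le_iff₀ (by positivity)]
  calc F ^ 2 ≤ c * (r ^ 3 * t * B) * (r * t) := by linarith
    _ ≤ c * (r ^ 3 * t * B) * 2 := by gcongr
    _ = 2 * c * (r ^ 2 * (r * t * B)) := by ring
    _ ≤ 2 * c * (r ^ 2 * P) := by gcongr
    _ = r ^ 2 * P * (2 * c) := by ring

theorem eventually_half_le_sub_of_tendsto {p : ℝ → ℝ}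
    (hp : Tendsto (fun r => r ^ 2 * p r) atTop atTop) (c : ℝ) :
    ∀ᶠ r in atTop, p r / 2 ≤ p r - c * (r ^ 2)⁻¹ := by
  filter_upwards [hp.eventually_ge_atTop (2 * c), eventually_gt_atTop 0] with r hpr hr
  have hc : c * (r ^ 2)⁻¹ ≤ p r / 2 := by
    rw [← div_eq_mul_inv, div_le_iff₀ (by positivity)]
    linarith
  linarith

theorem prop_4_4_steps_421_422_general
    (N : ℕ) (R₀ : ℝ)
    (Q₀ Q₀r : EuclideanSpace ℝ (Fin N) → ℝ)
    (hQ₀_nonpos : ∀ x : EuclideanSpace ℝ (Fin N), R₀ < ‖x‖ → Q₀ x ≤ 0)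
    (h : ℝ → ℝ)
    (hh : ∀ r : ℝ, R₀ < r → 0 < h r ∧ h r ≤ 2 / r)
    (b p : ℝ → ℝ)
    (hb : ∀ r : ℝ, R₀ < r →
      b r = sInf ((fun x => -(Q₀ x + (h r)⁻¹ * Q₀r x)) ''
        {x : EuclideanSpace ℝ (Fin N) | ‖x‖ = r}))
    (hp : ∀ r : ℝ, R₀ < r →
      p r = sInf ((fun x => -(2 * Q₀ x + r * Q₀r x)) ''
        {x : EuclideanSpace ℝ (Fin N) | ‖x‖ = r}))
    (c₀ : ℝ) (hc₀ : 0 < c₀) (F : ℝ → ℝ)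
    (hF : ∀ r : ℝ, R₀ < r → F r ^ 2 ≤ c₀ * r ^ 4 * (h r) ^ 2 * b r)
    (hFtop : Tendsto F atTop atTop) :
    Tendsto (fun r => r ^ 2 * p r) atTop atTop ∧
      ∀ c₁ : ℝ, 0 < c₁ → ∃ r₀ : ℝ, R₀ < r₀ ∧
        ∀ r : ℝ, r₀ ≤ r → p r / 2 ≤ p r - c₁ * (r ^ 2)⁻¹ := by
  have key : ∀ᶠ r in atTop, F r ^ 2 / (2 * c₀) ≤ r ^ 2 * p r := by
    filter_upwards [eventually_gt_atTop R₀, eventually_gt_atTop 0, hFtop.eventually_gt_atTop 0]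
      with r hR₀r hr hFr
    obtain ⟨hhr, hhr_le⟩ := hh r hR₀r
    have hrh : r * h r ≤ 2 := by rwa [le_div_iff₀ hr, mul_comm] at hhr_le
    have hb_pos : 0 < b r :=
      pos_of_mul_pos_right ((pow_pos hFr 2).trans_le (hF r hR₀r)) (by positivity)
    obtain ⟨hsphere, hbdd⟩ := Real.nonempty_and_bddBelow_of_sInf_ne_zero (hb r hR₀r ▸ hb_pos.ne')
    have hpb : r * h r * b r ≤ p r := by
      rw [hb r hR₀r, hp r hR₀r]
      refine mul_sInf_image_le_sInf_image (by positivity) hsphere.of_image hbdd fun x hx => ?_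
      exact mul_neg_add_inv_mul_le (hQ₀_nonpos x (hx.symm ▸ hR₀r)) hhr hrh
    exact sq_div_le_of_le_mul hc₀ hr hhr hrh hb_pos.le (hF r hR₀r) hpb
  have hmain : Tendsto (fun r => r ^ 2 * p r) atTop atTop :=
    tendsto_atTop_mono' atTop key
      (((tendsto_pow_atTop two_ne_zero).comp hFtop).atTop_div_const (by positivity))
  refine ⟨hmain, fun c₁ _ => ?_⟩
  obtain ⟨a, ha⟩ := eventually_atTop.1 (eventually_half_le_sub_of_tendsto hmain c₁)
  exact ⟨max a (R₀ + 1), by linarith [le_max_right a (R₀ + 1)],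
    fun r hr => ha r (le_of_max_le_left hr)⟩

/-- Steps (4.21)–(4.22) in the proof of Proposition 4.4: with
`b r = inf_{‖x‖ = r} (-(Q₀ x + (h r)⁻¹ * Q₀r x))` and
`p r = inf_{‖x‖ = r} (-(2 * Q₀ x + r * Q₀r x))`, if `F r ^ 2 ≤ c₀ * r ^ 4 *
(h r) ^ 2 * b r` for all `r > R₀` and `F r → ∞` as `r → ∞`, then
`r ^ 2 * p r → ∞` as `r → ∞` and, for every `c₁ > 0`, there is `r₀ > R₀` with
`p r - c₁ * r⁻² ≥ p r / 2` for all `r ≥ r₀`. -/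
theorem prop_4_4_steps_421_422
    (N : ℕ) (hN : 2 ≤ N) (R₀ : ℝ) (hR₀ : 0 < R₀)
    (Q₀ Q₀r : EuclideanSpace ℝ (Fin N) → ℝ)
    (hQ₀_bdd : ∀ r : ℝ, R₀ < r → ∃ C : ℝ,
      ∀ x : EuclideanSpace ℝ (Fin N), ‖x‖ = r → |Q₀ x| ≤ C)
    (hQ₀r_bdd : ∀ r : ℝ, R₀ < r → ∃ C : ℝ,
      ∀ x : EuclideanSpace ℝ (Fin N), ‖x‖ = r → |Q₀r x| ≤ C)
    (hQ₀_nonpos : ∀ x : EuclideanSpace ℝ (Fin N), R₀ < ‖x‖ → Q₀ x ≤ 0)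
    (h : ℝ → ℝ)
    (hh : ∀ r : ℝ, R₀ < r → 0 < h r ∧ h r ≤ 2 / r)
    (b p : ℝ → ℝ)
    (hb : ∀ r : ℝ, R₀ < r →
      b r = sInf ((fun x => -(Q₀ x + (h r)⁻¹ * Q₀r x)) ''
        {x : EuclideanSpace ℝ (Fin N) | ‖x‖ = r}))
    (hp : ∀ r : ℝ, R₀ < r →
      p r = sInf ((fun x => -(2 * Q₀ x + r * Q₀r x)) ''
        {x : EuclideanSpace ℝ (Fin N) | ‖x‖ = r}))
    (c₀ : ℝ) (hc₀ : 0 < c₀) (F : ℝ → ℝ)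
    (hF : ∀ r : ℝ, R₀ < r → F r ^ 2 ≤ c₀ * r ^ 4 * (h r) ^ 2 * b r)
    (hFtop : Tendsto F atTop atTop) :
    Tendsto (fun r => r ^ 2 * p r) atTop atTop ∧
      ∀ c₁ : ℝ, 0 < c₁ → ∃ r₀ : ℝ, R₀ < r₀ ∧
        ∀ r : ℝ, r₀ ≤ r → p r / 2 ≤ p r - c₁ * (r ^ 2)⁻¹ :=
  prop_4_4_steps_421_422_general N R₀ Q₀ Q₀r hQ₀_nonpos h hh b p hb hp c₀ hc₀ F hF hFtop
end

section
/- Let X be a complex Hilbert space with inner product ⟪·,·⟫ and norm ‖·‖, let r₄ > 0, and let v : ℝ → X be differentiable at every r ≥ r₄ with derivative v'(r). Suppose 2 Re ⟪v'(r), v(r)⟫ ≥ 2 r^{−1} ‖v(r)‖² for all r ≥ r₄, and suppose there is r₃ ≥ r₄ with ‖v(r₃)‖ > 0. Then for all r ≥ r₃ one has ‖v'(r)‖² ≥ r^{−2} ‖v(r)‖² ≥ r₃^{−2} ‖v(r₃)‖² > 0. (This is the essential content (5.18)–(5.20) of Proposition 5.4: the first inequality follows from the hypothesis together with the Cauchy–Schwarz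 inequality, the second from the monotonicity of r^{−2}‖v(r)‖².) -/
open Set

/-!
Since `(d/dr)‖v r‖² = 2 Re ⟪v' r, v r⟫ ≥ 2 r⁻¹ ‖v r‖²`, the function `r⁻² ‖v r‖²` has nonnegative
derivative, hence is monotone on `[r₃, ∞)`. Cauchy–Schwarz turns `r⁻¹ ‖v r‖² ≤ ‖v' r‖ ‖v r‖`
into `r⁻¹ ‖v r‖ ≤ ‖v' r‖`, which squares to the first inequality.
-/

theorem hasDerivAt_norm_sq_of_hasDerivAt {X : Type*} [NormedAddCommGroup X]
    [InnerProductSpace ℂ X] {v : ℝ → X} {v' : X} {r : ℝ} (hv : HasDerivAt v v' r) :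
    HasDerivAt (fun t => ‖v t‖ ^ 2) (2 * (inner ℂ v' (v r)).re) r := by
  let : InnerProductSpace ℝ X := InnerProductSpace.rclikeToReal ℂ X
  simpa only [real_inner_comm v', real_inner_eq_re_inner ℂ, RCLike.re_to_complex] using hv.norm_sq

theorem monotoneOn_inv_sq_mul_of_two_mul_inv_mul_le_deriv {a : ℝ} (ha : 0 < a) {f f' : ℝ → ℝ}
    (hf : ∀ r, a ≤ r → HasDerivAt f (f' r) r) (hf' : ∀ r, a ≤ r → 2 * r⁻¹ * f r ≤ f' r) :
    MonotoneOn (fun t => (t ^ 2)⁻¹ * f t) (Ici a) := by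
  have hderiv : ∀ r, a ≤ r →
      HasDerivAt (fun t => (t ^ 2)⁻¹ * f t) (-(2 * r) / (r ^ 2) ^ 2 * f r + (r ^ 2)⁻¹ * f' r) r :=
    fun r hr => (((hasDerivAt_pow 2 r).congr_deriv (by ring)).inv
      (pow_ne_zero 2 (ha.trans_le hr).ne')).mul (hf r hr)
  refine monotoneOn_of_hasDerivWithinAt_nonneg (convex_Ici a)
    (fun r hr => (hderiv r hr).continuousAt.continuousWithinAt)
    (fun r hr => (hderiv r (interior_subset hr)).hasDerivWithinAt) fun r hr => ?_
  have hr : a ≤ r := interior_subset hr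
  have hr0 : 0 < r := ha.trans_le hr
  -- the derivative equals `r⁻² (f' r - 2 r⁻¹ f r)`
  have hcancel : -(2 * r) / (r ^ 2) ^ 2 * f r + (r ^ 2)⁻¹ * (2 * r⁻¹ * f r) = 0 := by
    field_simp
    ring
  nlinarith [mul_le_mul_of_nonneg_left (hf' r hr) (inv_nonneg.2 (sq_nonneg r))]

theorem inv_sq_mul_norm_sq_le_norm_sq {𝕜 X : Type*} [RCLike 𝕜] [NormedAddCommGroup X]
    [InnerProductSpace 𝕜 X] {r : ℝ} (hr : 0 ≤ r) {x y : X}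
    (h : r⁻¹ * ‖x‖ ^ 2 ≤ RCLike.re (inner 𝕜 y x)) :
    (r ^ 2)⁻¹ * ‖x‖ ^ 2 ≤ ‖y‖ ^ 2 := by
  rcases (norm_nonneg x).eq_or_lt with hx | hx
  · simp [← hx]
  have hxy : r⁻¹ * ‖x‖ ≤ ‖y‖ := by
    refine le_of_mul_le_mul_right ?_ hx
    calc r⁻¹ * ‖x‖ * ‖x‖ = r⁻¹ * ‖x‖ ^ 2 := by ring
      _ ≤ RCLike.re (inner 𝕜 y x) := h
      _ ≤ ‖y‖ * ‖x‖ := re_inner_le_norm y x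
  calc (r ^ 2)⁻¹ * ‖x‖ ^ 2 = (r⁻¹ * ‖x‖) ^ 2 := by ring
    _ ≤ ‖y‖ ^ 2 := pow_le_pow_left₀ (by positivity) hxy 2

/-- The essential content (5.18)–(5.20) of Proposition 5.4: if
`2 Re ⟪v' r, v r⟫ ≥ 2 r⁻¹ ‖v r‖²` for all `r ≥ r₄` and `‖v r₃‖ > 0` for some
`r₃ ≥ r₄`, then for all `r ≥ r₃`,
`‖v' r‖² ≥ r⁻² ‖v r‖² ≥ r₃⁻² ‖v r₃‖² > 0`. -/
theorem prop_5_4_lower_bound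
    {X : Type*} [NormedAddCommGroup X] [InnerProductSpace ℂ X]
    (r₄ : ℝ) (hr₄ : 0 < r₄) (v v' : ℝ → X)
    (hdiff : ∀ r : ℝ, r₄ ≤ r → HasDerivAt v (v' r) r)
    (hineq : ∀ r : ℝ, r₄ ≤ r →
      2 * r⁻¹ * ‖v r‖ ^ 2 ≤ 2 * (inner ℂ (v' r) (v r) : ℂ).re)
    (r₃ : ℝ) (hr₃ : r₄ ≤ r₃) (hv : 0 < ‖v r₃‖) :
    ∀ r : ℝ, r₃ ≤ r →
      (r ^ 2)⁻¹ * ‖v r‖ ^ 2 ≤ ‖v' r‖ ^ 2 ∧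
      (r₃ ^ 2)⁻¹ * ‖v r₃‖ ^ 2 ≤ (r ^ 2)⁻¹ * ‖v r‖ ^ 2 ∧
      0 < (r₃ ^ 2)⁻¹ * ‖v r₃‖ ^ 2 := by
  have hmono : MonotoneOn (fun t => (t ^ 2)⁻¹ * ‖v t‖ ^ 2) (Ici r₄) :=
    monotoneOn_inv_sq_mul_of_two_mul_inv_mul_le_deriv hr₄
      (fun r hr => hasDerivAt_norm_sq_of_hasDerivAt (hdiff r hr)) hineq
  intro r hr
  have hr₄r : r₄ ≤ r := hr₃.trans hr
  refine ⟨inv_sq_mul_norm_sq_le_norm_sq (𝕜 := ℂ) (hr₄.trans_le hr₄r).le ?_,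
    hmono hr₃ hr₄r hr, ?_⟩
  · linarith [hineq r hr₄r, RCLike.re_to_complex (x := inner ℂ (v' r) (v r))]
  · have : 0 < r₃ := hr₄.trans_le hr₃
    positivity
end

section
/- Let X be a complex Hilbert space with inner product ⟪·,·⟫, let R₀ ∈ ℝ, and J = (R₀,∞). Let C₀ : J → B(X) be a family of bounded self-adjoint operators such that r ↦ ‖C₀(r)‖ is bounded on every compact subset of J and r ↦ ⟪C₀(r)x, y⟫ is measurable for all x, y ∈ X. Suppose there exist h₀ > 0, a family of bounded self-adjoint operators C₀ʳ(r; h) ∈ B(X) for r ∈ J and 0 < h ≤ h₀, and a family of bounded self-adjoint operators D(r) ∈ B(X) for r ∈ J with r ↦ ‖D(r)‖ bounded on compacts and r ↦ ⟪D(r)x, y⟫ measurable for all x, y, such that: (a) sup { ‖C₀ʳ(r; h)‖ : r ∈ K, 0 < h ≤ h₀ } < ∞ for every compact K ⊂ J; (b) (1/h)(⟪C₀(r+h)φ, φ⟫ − ⟪C₀(r)φ, φ⟫) ≤ ⟪C₀ʳ(r; h)φ, φ⟫ for all φ ∈ X, r ∈ J, 0 < h ≤ h₀ (these quadratic forms being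 real by self-adjointness); (c) ⟪C₀ʳ(r; h)φ, φ⟫ → ⟪D(r)φ, φ⟫ as h ↓ 0, for every φ ∈ X and r ∈ J. Let η : J → X be continuously differentiable with derivative η'. Then the distributional derivative of f(r) = ⟪C₀(r)η(r), η(r)⟫ on J is bounded above by g₀(r) = ⟪D(r)η(r), η(r)⟫ + 2 Re ⟪C₀(r)η(r), η'(r)⟫, in the sense that for every C^∞ function φ : ℝ → ℝ with compact support contained in J and φ ≥ 0, one has −∫_J f(r) φ'(r) dr ≤ ∫_J g₀(r) φ(r) dr. (Proposition 2.4, with C₀(r) the multiplication operator by Q₀(r·) on L²(S^{N−1}), C₀ʳ(r;h) multiplication by Q₀ʳ(r·;h), and D(r) multiplication by Q₀ʳ(r·).) -/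
open MeasureTheory Set Filter
open Topology

section Aux
variable {X : Type*} [NormedAddCommGroup X] [InnerProductSpace ℂ X]

lemma prop24_re_inner_bound (A : X →L[ℂ] X) (x y : X) :
    |(inner ℂ (A x) y : ℂ).re| ≤ ‖A‖ * ‖x‖ * ‖y‖ := by
  have h1 : |(inner ℂ (A x) y : ℂ).re| ≤ ‖(inner ℂ (A x) y : ℂ)‖ := Complex.abs_re_le_norm _
  have h2 : ‖(inner ℂ (A x) y : ℂ)‖ ≤ ‖A x‖ * ‖y‖ := norm_inner_le_norm _ _
  have h3 : ‖A x‖ * ‖y‖ ≤ (‖A‖ * ‖x‖) * ‖y‖ :=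
    mul_le_mul_of_nonneg_right (A.le_opNorm x) (norm_nonneg _)
  linarith

lemma prop24_measAux (c : ℝ) (T : ℝ → X →L[ℂ] X)
    (hT : ∀ x y : X, Measurable fun r : Set.Ioi c => (inner ℂ (T r x) y : ℂ))
    (u v : ℝ → X) (hu : ContinuousOn u (Set.Ioi c)) (hv : ContinuousOn v (Set.Ioi c)) :
    Measurable fun r : Set.Ioi c => (inner ℂ (T r (u r)) (v r) : ℂ).re := by
  have key : Measurable fun r : Set.Ioi c => (inner ℂ (T r (u r)) (v r) : ℂ) := by
    set s : ℕ → Set.Ioi c → ℝ :=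
      fun n r => max (c + 1 / ((n : ℝ) + 1)) ((⌊(r : ℝ) * ((n : ℝ) + 1)⌋ : ℝ) / ((n : ℝ) + 1))
      with hs_def
    have hs_mem : ∀ n (r : Set.Ioi c), s n r ∈ Set.Ioi c := by
      intro n r
      have h1 : c < c + 1 / ((n : ℝ) + 1) := lt_add_of_pos_right c (by positivity)
      exact lt_of_lt_of_le h1 (le_max_left _ _)
    have hs_tendsto : ∀ r : Set.Ioi c, Tendsto (fun n => s n r) atTop (𝓝 (r : ℝ)) := by
      intro r
      have h1 : Tendsto (fun n : ℕ => c + 1 / ((n : ℝ) + 1)) atTop (𝓝 (c + 0)) :=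
        tendsto_const_nhds.add tendsto_one_div_add_atTop_nhds_zero_nat
      have h2 : Tendsto (fun n : ℕ => (⌊(r : ℝ) * ((n : ℝ) + 1)⌋ : ℝ) / ((n : ℝ) + 1)) atTop
          (𝓝 (r : ℝ)) := by
        have hlow : Tendsto (fun n : ℕ => (r : ℝ) - 1 / ((n : ℝ) + 1)) atTop (𝓝 ((r : ℝ) - 0)) :=
          tendsto_const_nhds.sub tendsto_one_div_add_atTop_nhds_zero_nat
        rw [sub_zero] at hlow
        refine tendsto_of_tendsto_of_tendsto_of_le_of_le hlow tendsto_const_nhds ?_ ?_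
        · intro n
          have hn : (0 : ℝ) < (n : ℝ) + 1 := by positivity
          rw [le_div_iff₀ hn, sub_mul, div_mul_cancel₀ _ (ne_of_gt hn)]
          have := Int.sub_one_lt_floor ((r : ℝ) * ((n : ℝ) + 1))
          linarith
        · intro n
          have hn : (0 : ℝ) < (n : ℝ) + 1 := by positivity
          rw [div_le_iff₀ hn]
          exact Int.floor_le _
      have h3 := h1.max h2
      rw [add_zero] at h3
      rwa [max_eq_right (le_of_lt r.2)] at h3
    have hFn : ∀ n, Measurable fun r : Set.Ioi c =>
        (inner ℂ (T r (u (s n r))) (v (s n r)) : ℂ) := by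
      intro n
      have hfloor : Measurable fun r : Set.Ioi c => (⌊(r : ℝ) * ((n : ℝ) + 1)⌋ : ℤ) :=
        (measurable_subtype_coe.mul_const _).floor
      have hg : Measurable fun p : Set.Ioi c × ℤ =>
          (inner ℂ (T p.1 (u (max (c + 1 / ((n : ℝ) + 1)) ((p.2 : ℝ) / ((n : ℝ) + 1)))))
            (v (max (c + 1 / ((n : ℝ) + 1)) ((p.2 : ℝ) / ((n : ℝ) + 1)))) : ℂ) :=
        measurable_from_prod_countable_left fun k => by
          show Measurable fun x : Set.Ioi c =>
            (inner ℂ (T x (u (max (c + 1 / ((n : ℝ) + 1)) ((k : ℝ) / ((n : ℝ) + 1)))))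
              (v (max (c + 1 / ((n : ℝ) + 1)) ((k : ℝ) / ((n : ℝ) + 1)))) : ℂ)
          exact hT _ _
      exact hg.comp (measurable_id.prodMk hfloor)
    refine measurable_of_tendsto_metrizable hFn ?_
    rw [tendsto_pi_nhds]
    intro r
    have hsr : Tendsto (fun n => s n r) atTop (𝓝[Set.Ioi c] (r : ℝ)) :=
      tendsto_nhdsWithin_of_tendsto_nhds_of_eventually_within _ (hs_tendsto r)
        (Eventually.of_forall fun n => hs_mem n r)
    have hur : Tendsto (fun n => u (s n r)) atTop (𝓝 (u r)) := (hu r r.2).tendsto.comp hsr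
    have hvr : Tendsto (fun n => v (s n r)) atTop (𝓝 (v r)) := (hv r r.2).tendsto.comp hsr
    have hcont : Continuous fun p : X × X => (inner ℂ (T (r : ℝ) p.1) p.2 : ℂ) :=
      ((T (r : ℝ)).continuous.comp continuous_fst).inner continuous_snd
    exact (hcont.tendsto _).comp (hur.prodMk_nhds hvr)
  exact Complex.measurable_re.comp key

lemma prop24_meas_glob (c : ℝ) (f : ℝ → ℝ) (hf : Measurable fun r : Set.Ioi c => f r)
    (h0 : ∀ r, r ∉ Set.Ioi c → f r = 0) : Measurable f := by
  have hemb : MeasurableEmbedding ((↑) : Set.Ioi c → ℝ) :=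
    MeasurableEmbedding.subtype_coe measurableSet_Ioi
  have hext := hemb.measurable_extend hf (measurable_const (a := (0 : ℝ)))
  have heq : f = Function.extend ((↑) : Set.Ioi c → ℝ) (fun r : Set.Ioi c => f r)
      (fun _ => (0 : ℝ)) := by
    funext r
    by_cases hr : r ∈ Set.Ioi c
    · rw [show r = ((⟨r, hr⟩ : Set.Ioi c) : ℝ) from rfl, Subtype.coe_injective.extend_apply]
    · rw [Function.extend_apply', h0 r hr]
      rintro ⟨x, hx⟩
      exact hr (hx ▸ x.2)
  rw [heq]; exact hext

lemma prop24_sa_diff [CompleteSpace X] (A : X →L[ℂ] X) (hA : IsSelfAdjoint A) (u v : X) :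
    (inner ℂ (A u) u : ℂ).re - (inner ℂ (A v) v : ℂ).re = (inner ℂ (A (u + v)) (u - v) : ℂ).re := by
  have hexp : (inner ℂ (A (u + v)) (u - v) : ℂ) =
      (inner ℂ (A u) u : ℂ) - (inner ℂ (A u) v : ℂ) + ((inner ℂ (A v) u : ℂ) - (inner ℂ (A v) v : ℂ)) := by
    rw [map_add, inner_add_left, inner_sub_right, inner_sub_right]
    try ring
  have hconj : (inner ℂ (A v) u : ℂ) = starRingEnd ℂ (inner ℂ (A u) v : ℂ) := by
    rw [← ContinuousLinearMap.adjoint_inner_right A v u, hA.adjoint_eq, inner_conj_symm]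
  have hre : ((inner ℂ (A v) u : ℂ)).re = ((inner ℂ (A u) v : ℂ)).re := by
    rw [hconj, Complex.conj_re]
  rw [hexp]
  simp only [Complex.add_re, Complex.sub_re]
  linarith

end Aux

set_option maxHeartbeats 1600000

/-- Proposition 2.4: let `C₀ r` be a family of bounded self-adjoint operators on a
complex Hilbert space `X`, locally bounded in norm and weakly measurable on
`J = (R₀, ∞)`, whose quadratic forms have right difference quotients bounded by
those of self-adjoint operators `C₀r r h` which are locally uniformly bounded and
whose forms converge, as `h ↓ 0`, to those of self-adjoint operators `D r`.
If `η : J → X` is continuously differentiable, then the distributional derivative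
of `f r = ⟪C₀ r (η r), η r⟫` on `J` is bounded above by
`g₀ r = ⟪D r (η r), η r⟫ + 2 Re ⟪C₀ r (η r), η' r⟫`. -/
theorem prop_2_4
    {X : Type*} [NormedAddCommGroup X] [InnerProductSpace ℂ X] [CompleteSpace X]
    (R₀ : ℝ) (C₀ : ℝ → X →L[ℂ] X)
    (hC₀_sa : ∀ r ∈ Set.Ioi R₀, IsSelfAdjoint (C₀ r))
    (hC₀_bdd : ∀ K : Set ℝ, IsCompact K → K ⊆ Set.Ioi R₀ →
      ∃ C : ℝ, ∀ r ∈ K, ‖C₀ r‖ ≤ C)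
    (hC₀_meas : ∀ x y : X,
      Measurable (fun r : Set.Ioi R₀ => (inner ℂ (C₀ r x) y : ℂ)))
    (h₀ : ℝ) (hh₀ : 0 < h₀)
    (C₀r : ℝ → ℝ → X →L[ℂ] X)
    (hC₀r_sa : ∀ r ∈ Set.Ioi R₀, ∀ h : ℝ, 0 < h → h ≤ h₀ →
      IsSelfAdjoint (C₀r r h))
    (D : ℝ → X →L[ℂ] X)
    (hD_sa : ∀ r ∈ Set.Ioi R₀, IsSelfAdjoint (D r))
    (hD_bdd : ∀ K : Set ℝ, IsCompact K → K ⊆ Set.Ioi R₀ →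
      ∃ C : ℝ, ∀ r ∈ K, ‖D r‖ ≤ C)
    (hD_meas : ∀ x y : X,
      Measurable (fun r : Set.Ioi R₀ => (inner ℂ (D r x) y : ℂ)))
    (ha : ∀ K : Set ℝ, IsCompact K → K ⊆ Set.Ioi R₀ →
      ∃ C : ℝ, ∀ r ∈ K, ∀ h : ℝ, 0 < h → h ≤ h₀ → ‖C₀r r h‖ ≤ C)
    (hb : ∀ φ : X, ∀ r ∈ Set.Ioi R₀, ∀ h : ℝ, 0 < h → h ≤ h₀ →
      (1 / h) * ((inner ℂ (C₀ (r + h) φ) φ : ℂ).re - (inner ℂ (C₀ r φ) φ : ℂ).re) ≤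
        (inner ℂ (C₀r r h φ) φ : ℂ).re)
    (hc : ∀ φ : X, ∀ r ∈ Set.Ioi R₀,
      Tendsto (fun h : ℝ => (inner ℂ (C₀r r h φ) φ : ℂ).re)
        (nhdsWithin 0 (Set.Ioi 0)) (nhds ((inner ℂ (D r φ) φ : ℂ).re)))
    (η η' : ℝ → X)
    (hη : ∀ r ∈ Set.Ioi R₀, HasDerivAt η (η' r) r)
    (hη' : ContinuousOn η' (Set.Ioi R₀)) :
    ∀ φ : ℝ → ℝ, ContDiff ℝ (⊤ : ℕ∞) φ → HasCompactSupport φ →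
      tsupport φ ⊆ Set.Ioi R₀ → (∀ x, 0 ≤ φ x) →
      -(∫ r in Set.Ioi R₀, (inner ℂ (C₀ r (η r)) (η r) : ℂ).re * deriv φ r) ≤
        ∫ r in Set.Ioi R₀,
          ((inner ℂ (D r (η r)) (η r) : ℂ).re +
            2 * (inner ℂ (C₀ r (η r)) (η' r) : ℂ).re) * φ r := by
  intro φ hφ hφc hφsupp hφpos
  classical
  by_cases hφ0 : φ = 0
  · subst hφ0
    have hd0 : deriv (0 : ℝ → ℝ) = fun _ => 0 := by
      funext x
      exact deriv_const x 0
    simp [hd0]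
  -- continuity facts for φ
  have hφcont : Continuous φ := hφ.continuous
  have hφd : Differentiable ℝ φ := hφ.differentiable (by simp)
  have hφ'cont : Continuous (deriv φ) := hφ.continuous_deriv (by simp)
  have hφ'supp : Function.support (deriv φ) ⊆ tsupport φ := support_deriv_subset
  -- the compact support and the geometric constants
  set K : Set ℝ := tsupport φ with hK_def
  have hKco : IsCompact K := hφc
  have hKne : K.Nonempty := by
    rcases Function.ne_iff.1 hφ0 with ⟨x, hx⟩
    exact ⟨x, subset_tsupport φ hx⟩
  set m : ℝ := sInf K with hm_def
  have hmK : m ∈ K := hKco.sInf_mem hKne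
  have hmlb : ∀ x ∈ K, m ≤ x := fun x hx => csInf_le hKco.bddBelow hx
  have hm : R₀ < m := hφsupp hmK
  set b0 : ℝ := sSup K with hb0_def
  have hb0K : b0 ∈ K := hKco.sSup_mem hKne
  have hb0ub : ∀ x ∈ K, x ≤ b0 := fun x hx => le_csSup hKco.bddAbove hx
  set a : ℝ := (R₀ + m) / 2 with ha_def
  set δ : ℝ := min h₀ ((m - R₀) / 2) with hδ_def
  set b : ℝ := b0 + h₀ + 1 with hb_def
  have hR₀a : R₀ < a := by rw [ha_def]; linarith
  have ham : a < m := by rw [ha_def]; linarith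
  have hδ0 : 0 < δ := lt_min hh₀ (by linarith)
  have hδh₀ : δ ≤ h₀ := min_le_left _ _
  have haδm : a + δ ≤ m := by
    have h1 : δ ≤ (m - R₀) / 2 := min_le_right _ _
    rw [ha_def]; linarith
  have hmb0 : m ≤ b0 := hb0ub m hmK
  have hab : a ≤ b := by rw [hb_def]; linarith
  have hIsub : Set.Icc a b ⊆ Set.Ioi R₀ := fun x hx => lt_of_lt_of_le hR₀a hx.1
  have hKI : K ⊆ Set.Icc a b := fun x hx =>
    ⟨le_of_lt (lt_of_lt_of_le ham (hmlb x hx)), by have := hb0ub x hx; rw [hb_def]; linarith⟩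
  have hφ_zero : ∀ r, r ∉ K → φ r = 0 := fun r hr => image_eq_zero_of_notMem_tsupport hr
  have hφ'_zero : ∀ r, r ∉ K → deriv φ r = 0 := by
    intro r hr
    by_contra hne
    exact hr (hφ'supp hne)
  have hφ_mem : ∀ {r : ℝ}, φ r ≠ 0 → r ∈ K := fun {r} hr => subset_tsupport φ hr
  have hKaddmem : ∀ r ∈ K, ∀ h ∈ Set.Ioc (0:ℝ) δ, r + h ∈ Set.Icc a b := by
    intro r hr h hh
    obtain ⟨hh1, hh2⟩ := hh
    have h1 := hmlb r hr
    have h2 := hb0ub r hr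
    exact ⟨by linarith, by rw [hb_def]; linarith [hδh₀]⟩
  have hKsubmem : ∀ r ∈ K, ∀ h ∈ Set.Ioc (0:ℝ) δ, r - h ∈ Set.Icc a b := by
    intro r hr h hh
    obtain ⟨hh1, hh2⟩ := hh
    have h1 := hmlb r hr
    have h2 := hb0ub r hr
    exact ⟨by linarith, by rw [hb_def]; linarith [hh₀]⟩
  -- norm bounds on the compact interval
  obtain ⟨M₁, hM₁⟩ := hC₀_bdd (Set.Icc a b) isCompact_Icc hIsub
  obtain ⟨M₂, hM₂⟩ := hD_bdd (Set.Icc a b) isCompact_Icc hIsub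
  obtain ⟨M₃, hM₃⟩ := ha (Set.Icc a b) isCompact_Icc hIsub
  have hηc : ContinuousOn η (Set.Ioi R₀) := fun r hr => (hη r hr).continuousAt.continuousWithinAt
  obtain ⟨Mη, hMη⟩ := isCompact_Icc.exists_bound_of_continuousOn (hηc.mono hIsub)
  obtain ⟨Mη', hMη'⟩ := isCompact_Icc.exists_bound_of_continuousOn (hη'.mono hIsub)
  have haI : a ∈ Set.Icc a b := ⟨le_refl a, hab⟩
  have hM₁0 : 0 ≤ M₁ := le_trans (norm_nonneg _) (hM₁ a haI)
  have hM₂0 : 0 ≤ M₂ := le_trans (norm_nonneg _) (hM₂ a haI)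
  have hM₃0 : 0 ≤ M₃ := le_trans (norm_nonneg _) (hM₃ a haI δ hδ0 hδh₀)
  have hMη0 : 0 ≤ Mη := le_trans (norm_nonneg _) (hMη a haI)
  have hMη'0 : 0 ≤ Mη' := le_trans (norm_nonneg _) (hMη' a haI)
  obtain ⟨Cφ, hCφ⟩ : ∃ C : ℝ, ∀ x, ‖φ x‖ ≤ C := by
    obtain ⟨C, hC⟩ := hKco.exists_bound_of_continuousOn hφcont.continuousOn
    refine ⟨max C 0, fun x => ?_⟩
    by_cases hx : x ∈ K
    · exact le_trans (hC x hx) (le_max_left _ _)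
    · rw [hφ_zero x hx, norm_zero]; exact le_max_right _ _
  obtain ⟨Cφ', hCφ'⟩ : ∃ C : ℝ, ∀ x, ‖deriv φ x‖ ≤ C := by
    obtain ⟨C, hC⟩ := hKco.exists_bound_of_continuousOn hφ'cont.continuousOn
    refine ⟨max C 0, fun x => ?_⟩
    by_cases hx : x ∈ K
    · exact le_trans (hC x hx) (le_max_left _ _)
    · rw [hφ'_zero x hx, norm_zero]; exact le_max_right _ _
  have hCφ0 : 0 ≤ Cφ := le_trans (norm_nonneg _) (hCφ 0)
  have hCφ'0 : 0 ≤ Cφ' := le_trans (norm_nonneg _) (hCφ' 0)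
  -- Lipschitz estimates
  have hφlip : ∀ x y : ℝ, ‖φ y - φ x‖ ≤ Cφ' * ‖y - x‖ := by
    intro x y
    exact Convex.norm_image_sub_le_of_norm_hasDerivWithin_le
      (fun z _ => (hφd z).hasDerivAt.hasDerivWithinAt) (fun z _ => hCφ' z) convex_univ
      (Set.mem_univ x) (Set.mem_univ y)
  have hηlip : ∀ x ∈ Set.Icc a b, ∀ y ∈ Set.Icc a b, ‖η y - η x‖ ≤ Mη' * ‖y - x‖ := by
    intro x hx y hy
    exact Convex.norm_image_sub_le_of_norm_hasDerivWithin_le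
      (fun z hz => (hη z (hIsub hz)).hasDerivWithinAt) (fun z hz => hMη' z hz)
      (convex_Icc a b) hx hy
  -- general bound helper
  have habs_gen : ∀ (A : X →L[ℂ] X) (MA : ℝ), ‖A‖ ≤ MA → ∀ (x y : X) (mx my : ℝ),
      ‖x‖ ≤ mx → ‖y‖ ≤ my → ‖(inner ℂ (A x) y : ℂ).re‖ ≤ MA * mx * my := by
    intro A MA hA x y mx my hx hy
    have h0x : (0:ℝ) ≤ mx := le_trans (norm_nonneg _) hx
    have h0A : (0:ℝ) ≤ MA := le_trans (norm_nonneg _) hA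
    calc ‖(inner ℂ (A x) y : ℂ).re‖ ≤ ‖A‖ * ‖x‖ * ‖y‖ := prop24_re_inner_bound A x y
    _ ≤ MA * mx * my :=
      mul_le_mul (mul_le_mul hA hx (norm_nonneg _) h0A) hy (norm_nonneg _)
        (mul_nonneg h0A h0x)
  -- the functions
  set f : ℝ → ℝ := fun r => (inner ℂ (C₀ r (η r)) (η r) : ℂ).re with hf_def
  set d : ℝ → ℝ := fun r => (inner ℂ (D r (η r)) (η r) : ℂ).re with hd_def
  set g2 : ℝ → ℝ := fun r => 2 * (inner ℂ (C₀ r (η r)) (η' r) : ℂ).re * φ r with hg2_def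
  set P : ℝ → ℝ → ℝ := fun h r =>
    (1 / h) * ((inner ℂ (C₀ (r + h) (η r)) (η r) : ℂ).re -
      (inner ℂ (C₀ r (η r)) (η r) : ℂ).re) * φ r with hP_def
  set Φ : ℝ → ℝ → ℝ := fun h s =>
    (1 / h) * (inner ℂ (C₀ s (η s + η (s - h))) (η s - η (s - h)) : ℂ).re * φ (s - h) with hΦ_def
  set Q : ℝ → ℝ → ℝ := fun h r => (inner ℂ (C₀r r h (η r)) (η r) : ℂ).re * φ r with hQ_def
  set Θ : ℝ → ℝ → ℝ := fun h r => f r * ((φ r - φ (r - h)) / h) with hΘ_def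
  set Fq : ℝ → ℝ → ℝ := fun h r => (1 / h) * (f (r + h) - f r) * φ r with hFq_def
  -- splitting identity
  have hsplit : ∀ h ∈ Set.Ioc (0:ℝ) δ, ∀ r, Fq h r = P h r + Φ h (r + h) := by
    intro h hh r
    by_cases hr : φ r = 0
    · simp only [hFq_def, hP_def, hΦ_def, add_sub_cancel_right, hr, mul_zero, add_zero]
    · have hrK : r ∈ K := hφ_mem hr
      have hr2 : r + h ∈ Set.Ioi R₀ := hIsub (hKaddmem r hrK h hh)
      have hkey := prop24_sa_diff (C₀ (r + h)) (hC₀_sa (r + h) hr2) (η (r + h)) (η r)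
      simp only [hFq_def, hP_def, hΦ_def, hf_def, add_sub_cancel_right]
      linear_combination ((1 / h) * φ r) * hkey
  -- subtype measurability of the core functions
  have hmf : Measurable fun r : Set.Ioi R₀ => f r :=
    prop24_measAux R₀ C₀ hC₀_meas η η hηc hηc
  have hmfd : Measurable fun r : Set.Ioi R₀ => d r :=
    prop24_measAux R₀ D hD_meas η η hηc hηc
  have hmg : Measurable fun r : Set.Ioi R₀ => (inner ℂ (C₀ r (η r)) (η' r) : ℂ).re :=
    prop24_measAux R₀ C₀ hC₀_meas η η' hηc hη'
  have hm_fh : ∀ h : ℝ, 0 < h → Measurable fun r : Set.Ioi R₀ => f ((r : ℝ) + h) := by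
    intro h h0
    have hsm : Measurable fun r : Set.Ioi R₀ =>
        (⟨(r : ℝ) + h, lt_trans r.2 (lt_add_of_pos_right _ h0)⟩ : Set.Ioi R₀) :=
      (measurable_subtype_coe.add_const h).subtype_mk
    exact (prop24_measAux R₀ C₀ hC₀_meas η η hηc hηc).comp hsm
  have hm_core : ∀ h : ℝ, 0 < h →
      Measurable fun r : Set.Ioi R₀ => (inner ℂ (C₀ ((r : ℝ) + h) (η r)) (η r) : ℂ).re := by
    intro h h0
    have hsm : Measurable fun r : Set.Ioi R₀ =>
        (⟨(r : ℝ) + h, lt_trans r.2 (lt_add_of_pos_right _ h0)⟩ : Set.Ioi R₀) :=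
      (measurable_subtype_coe.add_const h).subtype_mk
    exact prop24_measAux R₀ (fun t => C₀ (t + h))
      (fun x y => (hC₀_meas x y).comp hsm) η η hηc hηc
  -- global measurability
  have hm_fφ' : Measurable fun r => f r * deriv φ r := by
    refine prop24_meas_glob R₀ _ (hmf.mul (hφ'cont.measurable.comp measurable_subtype_coe)) ?_
    intro r hr
    rw [hφ'_zero r (fun hK' => hr (hφsupp hK')), mul_zero]
  have hm_fφ : Measurable fun r => f r * φ r := by
    refine prop24_meas_glob R₀ _ (hmf.mul (hφcont.measurable.comp measurable_subtype_coe)) ?_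
    intro r hr
    rw [hφ_zero r (fun hK' => hr (hφsupp hK')), mul_zero]
  have hm_fφh : ∀ h ∈ Set.Ioc (0:ℝ) δ, Measurable fun r => f r * φ (r - h) := by
    intro h hh
    refine prop24_meas_glob R₀ _
      (hmf.mul (((hφcont.comp (continuous_id.sub continuous_const)).measurable).comp
        measurable_subtype_coe)) ?_
    intro r hr
    have : φ (r - h) = 0 := by
      refine hφ_zero _ fun hK' => hr ?_
      have h1 := hφsupp hK'
      simp only [Set.mem_Ioi] at *
      linarith [hh.1]
    rw [this, mul_zero]
  have hm_fhφ : ∀ h ∈ Set.Ioc (0:ℝ) δ, Measurable fun r => f (r + h) * φ r := by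
    intro h hh
    refine prop24_meas_glob R₀ _
      ((hm_fh h hh.1).mul (hφcont.measurable.comp measurable_subtype_coe)) ?_
    intro r hr
    rw [hφ_zero r (fun hK' => hr (hφsupp hK')), mul_zero]
  have hm_P : ∀ h ∈ Set.Ioc (0:ℝ) δ, Measurable (P h) := by
    intro h hh
    refine prop24_meas_glob R₀ _
      ((measurable_const.mul ((hm_core h hh.1).sub hmf)).mul
        (hφcont.measurable.comp measurable_subtype_coe)) ?_
    intro r hr
    simp only [hP_def]
    rw [hφ_zero r (fun hK' => hr (hφsupp hK')), mul_zero]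
  have hm_Φ : ∀ h ∈ Set.Ioc (0:ℝ) δ, Measurable (Φ h) := by
    intro h hh
    have hsub : Set.Ioi (R₀ + h) ⊆ Set.Ioi R₀ := fun x hx => by
      simp only [Set.mem_Ioi] at *; linarith [hh.1]
    have hincl : Measurable fun r : Set.Ioi (R₀ + h) => (⟨(r : ℝ), hsub r.2⟩ : Set.Ioi R₀) :=
      measurable_subtype_coe.subtype_mk
    have hT : ∀ x y : X, Measurable fun r : Set.Ioi (R₀ + h) => (inner ℂ (C₀ r x) y : ℂ) :=
      fun x y => (hC₀_meas x y).comp hincl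
    have hmap : Set.MapsTo (fun s : ℝ => s - h) (Set.Ioi (R₀ + h)) (Set.Ioi R₀) := by
      intro s hs
      simp only [Set.mem_Ioi] at *
      linarith
    have hcs : ContinuousOn (fun s : ℝ => η (s - h)) (Set.Ioi (R₀ + h)) :=
      hηc.comp (continuous_id.sub continuous_const).continuousOn hmap
    have hu : ContinuousOn (fun s => η s + η (s - h)) (Set.Ioi (R₀ + h)) :=
      (hηc.mono hsub).add hcs
    have hv : ContinuousOn (fun s => η s - η (s - h)) (Set.Ioi (R₀ + h)) :=
      (hηc.mono hsub).sub hcs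
    have hcore := prop24_measAux (R₀ + h) C₀ hT _ _ hu hv
    refine prop24_meas_glob (R₀ + h) (Φ h)
      ((measurable_const.mul hcore).mul
        (((hφcont.comp (continuous_id.sub continuous_const)).measurable).comp
          measurable_subtype_coe)) ?_
    intro s hs
    have : φ (s - h) = 0 := by
      refine hφ_zero _ fun hK' => hs ?_
      have h1 := hφsupp hK'
      simp only [Set.mem_Ioi] at *
      linarith
    simp only [hΦ_def, this, mul_zero]
  have hm_Q : ∀ h ∈ Set.Ioc (0:ℝ) δ, True := fun _ _ => trivial
  have hm_dφ : Measurable fun r => d r * φ r := by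
    refine prop24_meas_glob R₀ _ (hmfd.mul (hφcont.measurable.comp measurable_subtype_coe)) ?_
    intro r hr
    rw [hφ_zero r (fun hK' => hr (hφsupp hK')), mul_zero]
  have hm_g2 : Measurable g2 := by
    refine prop24_meas_glob R₀ g2
      ((measurable_const.mul hmg).mul (hφcont.measurable.comp measurable_subtype_coe)) ?_
    intro r hr
    simp only [hg2_def]
    rw [hφ_zero r (fun hK' => hr (hφsupp hK')), mul_zero]
  -- integrability helper
  have intHelper : ∀ w : ℝ → ℝ, Measurable w → (∀ r, r ∉ Set.Icc a b → w r = 0) →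
      ∀ c0 : ℝ, (∀ r ∈ Set.Icc a b, ‖w r‖ ≤ c0) → Integrable w := by
    intro w hw h0 c0 hbd
    have hind : Integrable ((Set.Icc a b).indicator fun _ => c0) :=
      IntegrableOn.integrable_indicator
        (integrableOn_const measure_Icc_lt_top.ne) measurableSet_Icc
    refine hind.mono' hw.aestronglyMeasurable (Eventually.of_forall fun r => ?_)
    by_cases hr : r ∈ Set.Icc a b
    · rw [Set.indicator_of_mem hr]
      exact hbd r hr
    · rw [Set.indicator_of_notMem hr, h0 r hr, norm_zero]
  -- bounds for integrands
  have hMf0 : 0 ≤ M₁ * Mη * Mη := mul_nonneg (mul_nonneg hM₁0 hMη0) hMη0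
  have hMd0 : 0 ≤ M₂ * Mη * Mη := mul_nonneg (mul_nonneg hM₂0 hMη0) hMη0
  have hMq0 : 0 ≤ M₃ * Mη * Mη := mul_nonneg (mul_nonneg hM₃0 hMη0) hMη0
  have habs_f : ∀ r ∈ Set.Icc a b, ‖f r‖ ≤ M₁ * Mη * Mη := fun r hr =>
    habs_gen (C₀ r) M₁ (hM₁ r hr) _ _ _ _ (hMη r hr) (hMη r hr)
  have habs_d : ∀ r ∈ Set.Icc a b, ‖d r‖ ≤ M₂ * Mη * Mη := fun r hr =>
    habs_gen (D r) M₂ (hM₂ r hr) _ _ _ _ (hMη r hr) (hMη r hr)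
  -- integrability of the various integrands
  have int_fφ' : Integrable (fun r => f r * deriv φ r) := by
    refine intHelper _ hm_fφ' ?_ (M₁ * Mη * Mη * Cφ') ?_
    · intro r hr
      rw [hφ'_zero r (fun hK' => hr (hKI hK')), mul_zero]
    · intro r hr
      rw [norm_mul]
      exact mul_le_mul (habs_f r hr) (hCφ' r) (norm_nonneg _) hMf0
  have int_fφ : Integrable (fun r => f r * φ r) := by
    refine intHelper _ hm_fφ ?_ (M₁ * Mη * Mη * Cφ) ?_
    · intro r hr
      rw [hφ_zero r (fun hK' => hr (hKI hK')), mul_zero]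
    · intro r hr
      rw [norm_mul]
      exact mul_le_mul (habs_f r hr) (hCφ r) (norm_nonneg _) hMf0
  have int_fφh : ∀ h ∈ Set.Ioc (0:ℝ) δ, Integrable (fun r => f r * φ (r - h)) := by
    intro h hh
    refine intHelper _ (hm_fφh h hh) ?_ (M₁ * Mη * Mη * Cφ) ?_
    · intro r hr
      have : φ (r - h) = 0 := by
        refine hφ_zero _ fun hK' => hr ?_
        have h6 := hKaddmem (r - h) hK' h hh
        have h7 : r - h + h = r := by ring
        rwa [h7] at h6
      rw [this, mul_zero]
    · intro r hr
      rw [norm_mul]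
      exact mul_le_mul (habs_f r hr) (hCφ _) (norm_nonneg _) hMf0
  have int_fhφ : ∀ h ∈ Set.Ioc (0:ℝ) δ, Integrable (fun r => f (r + h) * φ r) := by
    intro h hh
    refine intHelper _ (hm_fhφ h hh) ?_ (M₁ * Mη * Mη * Cφ) ?_
    · intro r hr
      rw [hφ_zero r (fun hK' => hr (hKI hK')), mul_zero]
    · intro r hr
      rw [norm_mul]
      by_cases hrφ : φ r = 0
      · rw [hrφ, norm_zero, mul_zero]
        exact mul_nonneg hMf0 hCφ0
      · have hrK : r ∈ K := hφ_mem hrφ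
        exact mul_le_mul (habs_f _ (hKaddmem r hrK h hh)) (hCφ r) (norm_nonneg _) hMf0
  have int_Θ : ∀ h ∈ Set.Ioc (0:ℝ) δ, Integrable (Θ h) := by
    intro h hh
    have heq : Θ h = fun r => (1 / h) * (f r * φ r) - (1 / h) * (f r * φ (r - h)) := by
      funext r
      simp only [hΘ_def]
      ring
    rw [heq]
    exact ((int_fφ.const_mul _).sub ((int_fφh h hh).const_mul _))
  have int_P : ∀ h ∈ Set.Ioc (0:ℝ) δ, Integrable (P h) := by
    intro h hh
    obtain ⟨hh1, hh2⟩ := hh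
    have h15 : (0:ℝ) ≤ 1 / h := le_of_lt (one_div_pos.2 hh1)
    refine intHelper _ (hm_P h ⟨hh1, hh2⟩) ?_ ((1 / h) * (M₁ * Mη * Mη + M₁ * Mη * Mη) * Cφ) ?_
    · intro r hr
      simp only [hP_def]
      rw [hφ_zero r (fun hK' => hr (hKI hK')), mul_zero]
    · intro r hr
      by_cases hrφ : φ r = 0
      · simp only [hP_def, hrφ, mul_zero, norm_zero]
        exact mul_nonneg (mul_nonneg h15 (by linarith [hMf0])) hCφ0
      · have hrK : r ∈ K := hφ_mem hrφ
        have h1 : ‖(inner ℂ (C₀ (r + h) (η r)) (η r) : ℂ).re‖ ≤ M₁ * Mη * Mη :=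
          habs_gen _ _ (hM₁ _ (hKaddmem r hrK h ⟨hh1, hh2⟩)) _ _ _ _ (hMη r hr) (hMη r hr)
        have h2 : ‖(inner ℂ (C₀ r (η r)) (η r) : ℂ).re‖ ≤ M₁ * Mη * Mη :=
          habs_gen _ _ (hM₁ r hr) _ _ _ _ (hMη r hr) (hMη r hr)
        simp only [hP_def, norm_mul]
        have h3 : ‖(inner ℂ (C₀ (r + h) (η r)) (η r) : ℂ).re -
            (inner ℂ (C₀ r (η r)) (η r) : ℂ).re‖ ≤ M₁ * Mη * Mη + M₁ * Mη * Mη := by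
          calc _ ≤ ‖(inner ℂ (C₀ (r + h) (η r)) (η r) : ℂ).re‖ +
              ‖(inner ℂ (C₀ r (η r)) (η r) : ℂ).re‖ := norm_sub_le _ _
          _ ≤ _ := add_le_add h1 h2
        have h4 : ‖(1:ℝ) / h‖ = 1 / h := by
          rw [Real.norm_eq_abs, abs_of_pos (one_div_pos.2 hh1)]
        rw [h4]
        exact mul_le_mul (mul_le_mul (le_refl _) h3 (norm_nonneg _) h15) (hCφ r)
          (norm_nonneg _) (mul_nonneg h15 (by linarith [hMf0]))
  have int_Φ : ∀ h ∈ Set.Ioc (0:ℝ) δ, Integrable (Φ h) := by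
    intro h hh
    obtain ⟨hh1, hh2⟩ := hh
    have h15 : (0:ℝ) ≤ 1 / h := le_of_lt (one_div_pos.2 hh1)
    have hMM : (0:ℝ) ≤ M₁ * (Mη + Mη) * (Mη' * h) :=
      mul_nonneg (mul_nonneg hM₁0 (by linarith)) (mul_nonneg hMη'0 (le_of_lt hh1))
    refine intHelper _ (hm_Φ h ⟨hh1, hh2⟩) ?_ ((1 / h) * (M₁ * (Mη + Mη) * (Mη' * h)) * Cφ) ?_
    · intro s hs
      have : φ (s - h) = 0 := by
        refine hφ_zero _ fun hK' => hs ?_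
        have h6 := hKaddmem (s - h) hK' h ⟨hh1, hh2⟩
        have h7 : s - h + h = s := by ring
        rwa [h7] at h6
      simp only [hΦ_def, this, mul_zero]
    · intro s hs
      by_cases hsφ : φ (s - h) = 0
      · simp only [hΦ_def, hsφ, mul_zero, norm_zero]
        exact mul_nonneg (mul_nonneg h15 hMM) hCφ0
      · have hsK : s - h ∈ K := hφ_mem hsφ
        have hsI : s - h ∈ Set.Icc a b := hKI hsK
        have h1 : ‖η s + η (s - h)‖ ≤ Mη + Mη :=
          le_trans (norm_add_le _ _) (add_le_add (hMη s hs) (hMη _ hsI))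
        have h2 : ‖η s - η (s - h)‖ ≤ Mη' * h := by
          have h8 := hηlip (s - h) hsI s hs
          rw [show s - (s - h) = h by ring] at h8
          rwa [Real.norm_eq_abs, abs_of_pos hh1] at h8
        have h3 : ‖(inner ℂ (C₀ s (η s + η (s - h))) (η s - η (s - h)) : ℂ).re‖ ≤
            M₁ * (Mη + Mη) * (Mη' * h) :=
          habs_gen _ _ (hM₁ s hs) _ _ _ _ h1 h2
        simp only [hΦ_def, norm_mul]
        have h4 : ‖(1:ℝ) / h‖ = 1 / h := by
          rw [Real.norm_eq_abs, abs_of_pos (one_div_pos.2 hh1)]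
        rw [h4]
        exact mul_le_mul (mul_le_mul (le_refl _) h3 (norm_nonneg _) h15) (hCφ _)
          (norm_nonneg _) (mul_nonneg h15 hMM)
  have int_Ψ : ∀ h ∈ Set.Ioc (0:ℝ) δ, Integrable (fun r => Φ h (r + h)) := by
    intro h hh
    exact (int_Φ h hh).comp_add_right h
  have int_dφ : Integrable (fun r => d r * φ r) := by
    refine intHelper _ hm_dφ ?_ (M₂ * Mη * Mη * Cφ) ?_
    · intro r hr
      rw [hφ_zero r (fun hK' => hr (hKI hK')), mul_zero]
    · intro r hr
      rw [norm_mul]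
      exact mul_le_mul (habs_d r hr) (hCφ r) (norm_nonneg _) hMd0
  have int_g2 : Integrable g2 := by
    refine intHelper _ hm_g2 ?_ (2 * (M₁ * Mη * Mη') * Cφ) ?_
    · intro r hr
      simp only [hg2_def]
      rw [hφ_zero r (fun hK' => hr (hKI hK')), mul_zero]
    · intro r hr
      simp only [hg2_def, norm_mul]
      have h1 : ‖(inner ℂ (C₀ r (η r)) (η' r) : ℂ).re‖ ≤ M₁ * Mη * Mη' :=
        habs_gen _ _ (hM₁ r hr) _ _ _ _ (hMη r hr) (hMη' r hr)
      have h2 : ‖(2:ℝ)‖ = 2 := by norm_num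
      rw [h2]
      have hMg0 : (0:ℝ) ≤ M₁ * Mη * Mη' := mul_nonneg (mul_nonneg hM₁0 hMη0) hMη'0
      exact mul_le_mul (mul_le_mul (le_refl _) h1 (norm_nonneg _) (by norm_num))
        (hCφ r) (norm_nonneg _) (by linarith [hMg0])
  -- the translation identity
  have hTrans : ∀ h ∈ Set.Ioc (0:ℝ) δ, ∫ r, Θ h r = -∫ r, Fq h r := by
    intro h hh
    have e1 : (fun r => Θ h r) = fun r => (1 / h) * (f r * φ r) - (1 / h) * (f r * φ (r - h)) := by
      funext r
      simp only [hΘ_def]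
      ring
    have e2 : (fun r => Fq h r) = fun r => (1 / h) * (f (r + h) * φ r) - (1 / h) * (f r * φ r) := by
      funext r
      simp only [hFq_def]
      ring
    have e3 : ∫ r, f r * φ (r - h) = ∫ r, f (r + h) * φ r := by
      have h5 := MeasureTheory.integral_add_right_eq_self (μ := volume)
        (fun r => f r * φ (r - h)) h
      rw [← h5]
      congr 1
      funext x
      rw [add_sub_cancel_right]
    have i1 : ∫ r, Θ h r = (1 / h) * (∫ r, f r * φ r) - (1 / h) * (∫ r, f r * φ (r - h)) := by
      rw [e1, integral_sub (int_fφ.const_mul (1 / h)) ((int_fφh h hh).const_mul (1 / h)),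
        MeasureTheory.integral_const_mul, MeasureTheory.integral_const_mul]
    have i2 : ∫ r, Fq h r = (1 / h) * (∫ r, f (r + h) * φ r) - (1 / h) * (∫ r, f r * φ r) := by
      rw [e2, integral_sub ((int_fhφ h hh).const_mul (1 / h)) (int_fφ.const_mul (1 / h)),
        MeasureTheory.integral_const_mul, MeasureTheory.integral_const_mul]
    rw [i1, i2, e3]
    ring
  -- pointwise limit of smul inner ℂ identity
  have hsmul_re : ∀ (c : ℝ) (uu vv : X),
      (inner ℂ uu (c • vv) : ℂ).re = c * (inner ℂ uu vv : ℂ).re := by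
    intro c uu vv
    have h1 : c • vv = (c : ℂ) • vv := by
      rw [← algebraMap_smul ℂ c vv]
      norm_num
    rw [h1, inner_smul_right]
    simp [Complex.mul_re]
  -- the map h ↦ r - h into the punctured/with-in filters
  have hmap_sub : ∀ r : ℝ, Tendsto (fun h : ℝ => r - h) (nhdsWithin 0 (Set.Ioc 0 δ)) (𝓝 r) := by
    intro r
    have h1 : Tendsto (fun h : ℝ => r - h) (𝓝 0) (𝓝 (r - 0)) :=
      tendsto_const_nhds.sub tendsto_id
    rw [sub_zero] at h1
    exact h1.mono_left nhdsWithin_le_nhds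
  have hmap_ne : ∀ r : ℝ, Tendsto (fun h : ℝ => r - h) (nhdsWithin 0 (Set.Ioc 0 δ))
      (nhdsWithin r {r}ᶜ) := by
    intro r
    refine tendsto_nhdsWithin_of_tendsto_nhds_of_eventually_within _ (hmap_sub r) ?_
    filter_upwards [eventually_mem_nhdsWithin] with h hh
    simp only [Set.mem_compl_iff, Set.mem_singleton_iff]
    intro hcon
    have : h = 0 := by linarith [sub_eq_iff_eq_add.1 hcon]
    exact absurd this (ne_of_gt hh.1)
  -- DC1 : ∫ Θ h → ∫ f * φ'
  have hDC1 : Tendsto (fun h => ∫ r, Θ h r) (nhdsWithin 0 (Set.Ioc 0 δ))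
      (𝓝 (∫ r, f r * deriv φ r)) := by
    refine tendsto_integral_filter_of_dominated_convergence
      ((Set.Icc a b).indicator fun _ => M₁ * Mη * Mη * Cφ') ?_ ?_ ?_ ?_
    · filter_upwards [eventually_mem_nhdsWithin] with h hh
      exact (int_Θ h hh).aestronglyMeasurable
    · filter_upwards [eventually_mem_nhdsWithin] with h hh
      refine Eventually.of_forall fun r => ?_
      by_cases hr : r ∈ Set.Icc a b
      · rw [Set.indicator_of_mem hr]
        have h1 : ‖(φ r - φ (r - h)) / h‖ ≤ Cφ' := by
          rw [norm_div, Real.norm_eq_abs h, abs_of_pos hh.1, div_le_iff₀ hh.1]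
          have h2 := hφlip (r - h) r
          rw [show r - (r - h) = h by ring, Real.norm_eq_abs h, abs_of_pos hh.1] at h2
          exact h2
        simp only [hΘ_def, norm_mul]
        exact mul_le_mul (habs_f r hr) h1 (norm_nonneg _) hMf0
      · rw [Set.indicator_of_notMem hr]
        have hr1 : φ r = 0 := hφ_zero r fun hK' => hr (hKI hK')
        have hr2 : φ (r - h) = 0 := by
          refine hφ_zero _ fun hK' => hr ?_
          have h6 := hKaddmem (r - h) hK' h hh
          have h7 : r - h + h = r := by ring
          rwa [h7] at h6
        simp only [hΘ_def, hr1, hr2, sub_zero, zero_div, mul_zero, norm_zero, le_refl]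
    · exact IntegrableOn.integrable_indicator
        (integrableOn_const measure_Icc_lt_top.ne) measurableSet_Icc
    · refine Eventually.of_forall fun r => ?_
      have hslope := hasDerivAt_iff_tendsto_slope.1 (hφd r).hasDerivAt
      have hq := hslope.comp (hmap_ne r)
      have hcongr : (fun h => slope φ r (r - h)) =ᶠ[nhdsWithin 0 (Set.Ioc 0 δ)]
          fun h => (φ r - φ (r - h)) / h := by
        filter_upwards [eventually_mem_nhdsWithin] with h hh
        have hne : h ≠ 0 := ne_of_gt hh.1
        rw [slope_def_field, show r - h - r = -h by ring, div_neg, ← neg_div, neg_sub]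
      have hq2 : Tendsto (fun h => (φ r - φ (r - h)) / h) (nhdsWithin 0 (Set.Ioc 0 δ))
          (𝓝 (deriv φ r)) := (hq.congr' hcongr)
      exact hq2.const_mul (f r)
  -- DC2 : ∫ Φ h → ∫ g2
  have hDC2 : Tendsto (fun h => ∫ s, Φ h s) (nhdsWithin 0 (Set.Ioc 0 δ))
      (𝓝 (∫ s, g2 s)) := by
    refine tendsto_integral_filter_of_dominated_convergence
      ((Set.Icc a b).indicator fun _ => M₁ * (Mη + Mη) * Mη' * Cφ) ?_ ?_ ?_ ?_
    · filter_upwards [eventually_mem_nhdsWithin] with h hh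
      exact (int_Φ h hh).aestronglyMeasurable
    · filter_upwards [eventually_mem_nhdsWithin] with h hh
      refine Eventually.of_forall fun s => ?_
      by_cases hsφ : φ (s - h) = 0
      · simp only [hΦ_def, hsφ, mul_zero, norm_zero]
        exact Set.indicator_apply_nonneg fun _ =>
          mul_nonneg (mul_nonneg (mul_nonneg hM₁0 (by linarith)) hMη'0) hCφ0
      · have hsK : s - h ∈ K := hφ_mem hsφ
        have hsI : s - h ∈ Set.Icc a b := hKI hsK
        have hs : s ∈ Set.Icc a b := by
          have h6 := hKaddmem (s - h) hsK h hh
          have h7 : s - h + h = s := by ring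
          rwa [h7] at h6
        rw [Set.indicator_of_mem hs]
        have h1 : ‖η s + η (s - h)‖ ≤ Mη + Mη :=
          le_trans (norm_add_le _ _) (add_le_add (hMη s hs) (hMη _ hsI))
        have h2 : ‖η s - η (s - h)‖ ≤ Mη' * h := by
          have h8 := hηlip (s - h) hsI s hs
          rw [show s - (s - h) = h by ring] at h8
          rwa [Real.norm_eq_abs, abs_of_pos hh.1] at h8
        have h3 : ‖(inner ℂ (C₀ s (η s + η (s - h))) (η s - η (s - h)) : ℂ).re‖ ≤
            M₁ * (Mη + Mη) * (Mη' * h) := habs_gen _ _ (hM₁ s hs) _ _ _ _ h1 h2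
        have h15 : (0:ℝ) ≤ 1 / h := le_of_lt (one_div_pos.2 hh.1)
        simp only [hΦ_def, norm_mul]
        have h4 : ‖(1:ℝ) / h‖ = 1 / h := by
          rw [Real.norm_eq_abs, abs_of_pos (one_div_pos.2 hh.1)]
        rw [h4]
        have hne : h ≠ 0 := ne_of_gt hh.1
        have hMM : (0:ℝ) ≤ M₁ * (Mη + Mη) * (Mη' * h) :=
          mul_nonneg (mul_nonneg hM₁0 (by linarith)) (mul_nonneg hMη'0 (le_of_lt hh.1))
        calc 1 / h * ‖(inner ℂ (C₀ s (η s + η (s - h))) (η s - η (s - h)) : ℂ).re‖ * ‖φ (s - h)‖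
            ≤ 1 / h * (M₁ * (Mη + Mη) * (Mη' * h)) * Cφ :=
              mul_le_mul (mul_le_mul (le_refl _) h3 (norm_nonneg _) h15) (hCφ _)
                (norm_nonneg _) (mul_nonneg h15 hMM)
          _ = M₁ * (Mη + Mη) * Mη' * Cφ := by
              rw [show 1 / h * (M₁ * (Mη + Mη) * (Mη' * h)) * Cφ =
                M₁ * (Mη + Mη) * Mη' * Cφ * (h * (1 / h)) by ring,
                mul_one_div_cancel hne, mul_one]
    · exact IntegrableOn.integrable_indicator
        (integrableOn_const measure_Icc_lt_top.ne) measurableSet_Icc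
    · refine Eventually.of_forall fun s => ?_
      by_cases hs : s ∈ Set.Ioi R₀
      · have hs' : R₀ < s := hs
        have hA : Tendsto (fun h : ℝ => η (s - h)) (nhdsWithin 0 (Set.Ioc 0 δ)) (𝓝 (η s)) :=
          ((hη s hs).continuousAt.tendsto).comp (hmap_sub s)
        have hZ : Tendsto (fun h : ℝ => h⁻¹ • (η s - η (s - h))) (nhdsWithin 0 (Set.Ioc 0 δ))
            (𝓝 (η' s)) := by
          have hslope := hasDerivAt_iff_tendsto_slope.1 (hη s hs)
          have hq := hslope.comp (hmap_ne s)
          refine hq.congr' ?_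
          filter_upwards [eventually_mem_nhdsWithin] with h hh
          have hne : h ≠ 0 := ne_of_gt hh.1
          show slope η s (s - h) = h⁻¹ • (η s - η (s - h))
          rw [slope_def_module, show s - h - s = -h by ring, inv_neg, neg_smul, ← smul_neg,
            neg_sub]
        have hφt : Tendsto (fun h : ℝ => φ (s - h)) (nhdsWithin 0 (Set.Ioc 0 δ)) (𝓝 (φ s)) :=
          (hφcont.tendsto s).comp (hmap_sub s)
        have hcont : Continuous fun p : X × X × ℝ =>
            (inner ℂ (C₀ s (η s + p.1)) p.2.1 : ℂ).re * p.2.2 := by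
          refine (Complex.continuous_re.comp ?_).mul continuous_snd.snd
          exact ((C₀ s).continuous.comp (continuous_const.add continuous_fst)).inner
            continuous_snd.fst
        have hcomb := (hcont.tendsto (η s, η' s, φ s)).comp
          (hA.prodMk_nhds (hZ.prodMk_nhds hφt))
        have hlimval : (inner ℂ (C₀ s (η s + η s)) (η' s) : ℂ).re * φ s = g2 s := by
          simp only [hg2_def]
          rw [map_add, inner_add_left, Complex.add_re]
          ring
        rw [hlimval] at hcomb
        refine hcomb.congr' ?_
        filter_upwards [eventually_mem_nhdsWithin] with h hh
        show (inner ℂ (C₀ s (η s + η (s - h))) (h⁻¹ • (η s - η (s - h))) : ℂ).re * φ (s - h)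
          = Φ h s
        rw [hsmul_re]
        simp only [hΦ_def, one_div]
        try ring
      · have hg2s : g2 s = 0 := by
          have : φ s = 0 := hφ_zero s fun hK' => hs (hφsupp hK')
          simp only [hg2_def, this, mul_zero]
        rw [hg2s]
        refine tendsto_const_nhds.congr' ?_
        filter_upwards [eventually_mem_nhdsWithin] with h hh
        have : φ (s - h) = 0 := by
          refine hφ_zero _ fun hK' => hs ?_
          have h1 := hφsupp hK'
          simp only [Set.mem_Ioi] at *
          linarith [hh.1]
        simp only [hΦ_def, this, mul_zero]
  -- translation for Φ / Ψ
  have hΨΦ : ∀ h ∈ Set.Ioc (0:ℝ) δ, ∫ r, Φ h (r + h) = ∫ s, Φ h s := fun h _ =>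
    MeasureTheory.integral_add_right_eq_self (μ := volume) (Φ h) h
  have hFqint : ∀ h ∈ Set.Ioc (0:ℝ) δ, ∫ r, Fq h r = (∫ r, P h r) + ∫ s, Φ h s := by
    intro h hh
    have he : (fun r => Fq h r) = fun r => P h r + Φ h (r + h) := funext (hsplit h hh)
    rw [he, integral_add (int_P h hh) (int_Ψ h hh), hΨΦ h hh]
  -- convergence of ∫ P h
  have hTP : Tendsto (fun h => ∫ r, P h r) (nhdsWithin 0 (Set.Ioc 0 δ))
      (𝓝 (-(∫ r, f r * deriv φ r) - ∫ s, g2 s)) := by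
    have h1 : Tendsto (fun h => -(∫ r, Θ h r) - ∫ s, Φ h s) (nhdsWithin 0 (Set.Ioc 0 δ))
        (𝓝 (-(∫ r, f r * deriv φ r) - ∫ s, g2 s)) := hDC1.neg.sub hDC2
    refine h1.congr' ?_
    filter_upwards [eventually_mem_nhdsWithin] with h hh
    rw [hTrans h hh, hFqint h hh]
    ring
  -- the sequence hₙ = δ / (n+1)
  set hsq : ℕ → ℝ := fun n => δ / (n + 1) with hsq_def
  have hsq_mem : ∀ n, hsq n ∈ Set.Ioc (0:ℝ) δ := by
    intro n
    constructor
    · positivity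
    · rw [div_le_iff₀ (by positivity)]
      nlinarith [hδ0, Nat.cast_nonneg (α := ℝ) n]
  have hsq_tend : Tendsto hsq atTop (nhdsWithin 0 (Set.Ioc 0 δ)) := by
    refine tendsto_nhdsWithin_of_tendsto_nhds_of_eventually_within _ ?_
      (Eventually.of_forall hsq_mem)
    have h1 : Tendsto (fun n : ℕ => δ * (1 / ((n : ℝ) + 1))) atTop (𝓝 (δ * 0)) :=
      tendsto_const_nhds.mul tendsto_one_div_add_atTop_nhds_zero_nat
    rw [mul_zero] at h1
    refine h1.congr fun n => ?_
    rw [mul_one_div]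
  have hTPn : Tendsto (fun n => ∫ r, P (hsq n) r) atTop
      (𝓝 (-(∫ r, f r * deriv φ r) - ∫ s, g2 s)) := hTP.comp hsq_tend
  -- the comparison with Q and the constant M
  set M : ℝ := (M₂ + M₃) * (Mη * Mη) with hM_def
  have hM0 : 0 ≤ M := mul_nonneg (by linarith) (mul_nonneg hMη0 hMη0)
  have hPleQ : ∀ h ∈ Set.Ioc (0:ℝ) δ, ∀ r, P h r ≤ Q h r := by
    intro h hh r
    by_cases hr : φ r = 0
    · simp only [hP_def, hQ_def, hr, mul_zero, le_refl]
    · have hr1 : r ∈ Set.Ioi R₀ := hφsupp (hφ_mem hr)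
      have h1 := hb (η r) r hr1 h hh.1 (hh.2.trans hδh₀)
      exact mul_le_mul_of_nonneg_right h1 (hφpos r)
  have hQleM : ∀ h ∈ Set.Ioc (0:ℝ) δ, ∀ r, Q h r ≤ M * φ r := by
    intro h hh r
    by_cases hr : φ r = 0
    · simp only [hQ_def, hr, mul_zero, le_refl]
    · have hrI : r ∈ Set.Icc a b := hKI (hφ_mem hr)
      have h1 : ‖(inner ℂ (C₀r r h (η r)) (η r) : ℂ).re‖ ≤ M₃ * Mη * Mη :=
        habs_gen _ _ (hM₃ r hrI h hh.1 (hh.2.trans hδh₀)) _ _ _ _ (hMη r hrI) (hMη r hrI)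
      have h2 : (inner ℂ (C₀r r h (η r)) (η r) : ℂ).re ≤ M := by
        have h3 := le_trans (le_abs_self _) h1
        rw [hM_def]
        nlinarith [hM₂0, hMη0]
      exact mul_le_mul_of_nonneg_right h2 (hφpos r)
  have hQtend : ∀ r, Tendsto (fun n => Q (hsq n) r) atTop (𝓝 (d r * φ r)) := by
    intro r
    by_cases hr : φ r = 0
    · have he : (fun n => Q (hsq n) r) = fun _ => 0 := by
        funext n
        simp only [hQ_def, hr, mul_zero]
      rw [he, hr, mul_zero]
      exact tendsto_const_nhds
    · have hr1 : r ∈ Set.Ioi R₀ := hφsupp (hφ_mem hr)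
      have h1 := hc (η r) r hr1
      have h2 : Tendsto hsq atTop (nhdsWithin 0 (Set.Ioi 0)) :=
        hsq_tend.mono_right (nhdsWithin_mono _ Set.Ioc_subset_Ioi_self)
      exact (h1.comp h2).mul_const (φ r)
  -- the auxiliary nonnegative functions uₙ
  set u : ℕ → ℝ → ℝ := fun n r => M * φ r - P (hsq n) r with hu_def
  have hu_nonneg : ∀ n r, 0 ≤ u n r := by
    intro n r
    have h1 := (hPleQ _ (hsq_mem n) r).trans (hQleM _ (hsq_mem n) r)
    simp only [hu_def]
    linarith
  have hu_meas : ∀ n, Measurable (u n) := fun n =>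
    (measurable_const.mul hφcont.measurable).sub (hm_P _ (hsq_mem n))
  have int_Mφ : Integrable (fun r => M * φ r) :=
    (hφcont.integrable_of_hasCompactSupport hφc).const_mul M
  have hu_int : ∀ n, Integrable (u n) := fun n => int_Mφ.sub (int_P _ (hsq_mem n))
  have hu_integral : ∀ n, ∫ r, u n r = (∫ r, M * φ r) - ∫ r, P (hsq n) r := fun n =>
    integral_sub int_Mφ (int_P _ (hsq_mem n))
  have hu_tend : Tendsto (fun n => ∫ r, u n r) atTop
      (𝓝 ((∫ r, M * φ r) - (-(∫ r, f r * deriv φ r) - ∫ s, g2 s))) := by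
    refine (tendsto_const_nhds.sub hTPn).congr fun n => ?_
    rw [hu_integral n]
  have hBnn : 0 ≤ (∫ r, M * φ r) - (-(∫ r, f r * deriv φ r) - ∫ s, g2 s) :=
    ge_of_tendsto hu_tend (Eventually.of_forall fun n => integral_nonneg (hu_nonneg n))
  -- the limit function w
  set w : ℝ → ℝ := fun r => M * φ r - d r * φ r with hw_def
  have hw_nonneg : ∀ r, 0 ≤ w r := by
    intro r
    by_cases hr : φ r = 0
    · simp only [hw_def, hr, mul_zero, sub_zero, le_refl]
    · have hrI : r ∈ Set.Icc a b := hKI (hφ_mem hr)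
      have h1 := le_trans (le_abs_self _) (habs_d r hrI)
      have h2 : d r ≤ M := by
        rw [hM_def]
        nlinarith [hM₃0, hMη0]
      simp only [hw_def]
      nlinarith [hφpos r]
  have hw_meas : Measurable w := (measurable_const.mul hφcont.measurable).sub hm_dφ
  have hw_int : Integrable w := int_Mφ.sub int_dφ
  -- Fatou chain in ℝ≥0∞
  have step1 : ENNReal.ofReal (∫ r, w r) = ∫⁻ r, ENNReal.ofReal (w r) :=
    MeasureTheory.ofReal_integral_eq_lintegral_ofReal hw_int (Eventually.of_forall hw_nonneg)
  have step2 : ∫⁻ r, ENNReal.ofReal (w r) ≤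
      ∫⁻ r, Filter.liminf (fun n => ENNReal.ofReal (u n r)) atTop := by
    refine lintegral_mono fun r => ?_
    have hv : Tendsto (fun n => M * φ r - Q (hsq n) r) atTop (𝓝 (w r)) := by
      simp only [hw_def]
      exact tendsto_const_nhds.sub (hQtend r)
    have h1 : Tendsto (fun n => ENNReal.ofReal (M * φ r - Q (hsq n) r)) atTop
        (𝓝 (ENNReal.ofReal (w r))) := (ENNReal.continuous_ofReal.tendsto _).comp hv
    rw [← h1.liminf_eq]
    refine Filter.liminf_le_liminf (Eventually.of_forall fun n => ?_)
    refine ENNReal.ofReal_le_ofReal ?_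
    have h2 := hPleQ _ (hsq_mem n) r
    simp only [hu_def]
    linarith
  have step3 : ∫⁻ r, Filter.liminf (fun n => ENNReal.ofReal (u n r)) atTop ≤
      Filter.liminf (fun n => ∫⁻ r, ENNReal.ofReal (u n r)) atTop :=
    lintegral_liminf_le fun n => (hu_meas n).ennreal_ofReal
  have step4 : Filter.liminf (fun n => ∫⁻ r, ENNReal.ofReal (u n r)) atTop =
      ENNReal.ofReal ((∫ r, M * φ r) - (-(∫ r, f r * deriv φ r) - ∫ s, g2 s)) := by
    have he : (fun n => ∫⁻ r, ENNReal.ofReal (u n r)) =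
        fun n => ENNReal.ofReal (∫ r, u n r) := by
      funext n
      exact (MeasureTheory.ofReal_integral_eq_lintegral_ofReal (hu_int n)
        (Eventually.of_forall (hu_nonneg n))).symm
    rw [he]
    exact ((ENNReal.continuous_ofReal.tendsto _).comp hu_tend).liminf_eq
  have hkey : ENNReal.ofReal (∫ r, w r) ≤
      ENNReal.ofReal ((∫ r, M * φ r) - (-(∫ r, f r * deriv φ r) - ∫ s, g2 s)) := by
    rw [step1, ← step4]
    exact le_trans step2 step3
  have hreal : ∫ r, w r ≤ (∫ r, M * φ r) - (-(∫ r, f r * deriv φ r) - ∫ s, g2 s) :=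
    (ENNReal.ofReal_le_ofReal_iff hBnn).1 hkey
  have hw_integral : ∫ r, w r = (∫ r, M * φ r) - ∫ r, d r * φ r :=
    integral_sub int_Mφ int_dφ
  have hL₁ : -(∫ r, f r * deriv φ r) - ∫ s, g2 s ≤ ∫ r, d r * φ r := by
    rw [hw_integral] at hreal
    linarith
  -- conclusion
  have hgoalL : ∫ r in Set.Ioi R₀, (inner ℂ (C₀ r (η r)) (η r) : ℂ).re * deriv φ r =
      ∫ r, f r * deriv φ r := by
    refine MeasureTheory.setIntegral_eq_integral_of_forall_compl_eq_zero fun r hr => ?_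
    rw [hφ'_zero r (fun hK' => hr (hφsupp hK')), mul_zero]
  have hgoalR : ∫ r in Set.Ioi R₀, ((inner ℂ (D r (η r)) (η r) : ℂ).re +
      2 * (inner ℂ (C₀ r (η r)) (η' r) : ℂ).re) * φ r = (∫ r, d r * φ r) + ∫ s, g2 s := by
    rw [MeasureTheory.setIntegral_eq_integral_of_forall_compl_eq_zero
      (fun r hr => by rw [hφ_zero r (fun hK' => hr (hφsupp hK')), mul_zero])]
    rw [← integral_add int_dφ int_g2]
    congr 1
    funext r
    simp only [hd_def, hg2_def]
    ring
  rw [hgoalL, hgoalR]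
  linarith
end
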